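/- arXiv:0708.0957 — 10 statements merged into one kernel-verified Lean document; each statement's English description precedes it below -/
import Mathlib

section
/- Let 𝔐 = (V, ⟨·,·⟩, R) be a model and let T : V → V be a ⟨·,·⟩-self-adjoint linear map. Then the following assertions are equivalent: (1) 𝓡(x,y)∘T = T∘𝓡(x,y) for all x,y ∈ V; (2) J(x)∘T = T∘J(x) for all x ∈ V; (3) R(Tx,y,z,w) = R(x,Ty,z,w) = R(x,y,Tz,w) = R(x,y,z,Tw) for all x,y,z,w ∈ V. -/
set_option maxHeartbeats 2000000 in
/-- For a model (V, ⟨·,·⟩, R) and a self-adjoint linear map T, the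
conditions (1) 𝓡(x,y)∘T = T∘𝓡(x,y), (2) J(x)∘T = T∘J(x), and
(3) R(Tx,y,z,w) = R(x,Ty,z,w) = R(x,y,Tz,w) = R(x,y,z,Tw) are equivalent. -/
theorem stmt0 {V : Type*} [AddCommGroup V] [Module ℝ V] [FiniteDimensional ℝ V]
    (B : V →ₗ[ℝ] V →ₗ[ℝ] ℝ)
    (hBsymm : ∀ x y, B x y = B y x)
    (hBnd : ∀ x, (∀ y, B x y = 0) → x = 0)
    (R : V →ₗ[ℝ] V →ₗ[ℝ] V →ₗ[ℝ] V →ₗ[ℝ] ℝ)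
    (hR1 : ∀ x y z w, R x y z w = -R y x z w)
    (hR2 : ∀ x y z w, R x y z w = R z w x y)
    (hR3 : ∀ x y z w, R x y z w + R y z x w + R z x y w = 0)
    (Rop : V → V → V →ₗ[ℝ] V)
    (hRop : ∀ x y z w, B (Rop x y z) w = R x y z w)
    (J : V → V →ₗ[ℝ] V)
    (hJ : ∀ x y z, B (J x y) z = R y x x z)
    (T : V →ₗ[ℝ] V)
    (hT : ∀ x y, B (T x) y = B x (T y)) :
    ((∀ x y, (Rop x y) ∘ₗ T = T ∘ₗ (Rop x y)) ↔ (∀ x, (J x) ∘ₗ T = T ∘ₗ (J x)))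
    ∧ ((∀ x, (J x) ∘ₗ T = T ∘ₗ (J x)) ↔
        (∀ x y z w, R (T x) y z w = R x (T y) z w ∧ R x (T y) z w = R x y (T z) w ∧
          R x y (T z) w = R x y z (T w))) := by
  -- nondegeneracy in the useful form
  have nd : ∀ u v : V, (∀ w, B u w = B v w) → u = v := by
    intro u v h
    have h0 : ∀ w, B (u - v) w = 0 := by
      intro w
      simp [map_sub, LinearMap.sub_apply, h w]
    exact sub_eq_zero.mp (hBnd _ h0)
  -- bridge for condition (1)
  have bridgeR : (∀ x y, (Rop x y) ∘ₗ T = T ∘ₗ (Rop x y)) ↔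
      (∀ x y z w, R x y (T z) w = R x y z (T w)) := by
    constructor
    · intro h x y z w
      have hz := LinearMap.congr_fun (h x y) z
      simp only [LinearMap.comp_apply] at hz
      calc R x y (T z) w = B (Rop x y (T z)) w := (hRop _ _ _ _).symm
        _ = B (T (Rop x y z)) w := by rw [hz]
        _ = B (Rop x y z) (T w) := hT _ _
        _ = R x y z (T w) := hRop _ _ _ _
    · intro h x y
      apply LinearMap.ext
      intro z
      apply nd
      intro w
      simp only [LinearMap.comp_apply]
      calc B (Rop x y (T z)) w = R x y (T z) w := hRop _ _ _ _
        _ = R x y z (T w) := h _ _ _ _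
        _ = B (Rop x y z) (T w) := (hRop _ _ _ _).symm
        _ = B (T (Rop x y z)) w := (hT _ _).symm
  -- bridge for condition (2)
  have bridgeJ : (∀ x, (J x) ∘ₗ T = T ∘ₗ (J x)) ↔
      (∀ x y z, R (T y) x x z = R y x x (T z)) := by
    constructor
    · intro h x y z
      have hz := LinearMap.congr_fun (h x) y
      simp only [LinearMap.comp_apply] at hz
      calc R (T y) x x z = B (J x (T y)) z := (hJ _ _ _).symm
        _ = B (T (J x y)) z := by rw [hz]
        _ = B (J x y) (T z) := hT _ _
        _ = R y x x (T z) := hJ _ _ _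
    · intro h x
      apply LinearMap.ext
      intro y
      apply nd
      intro z
      simp only [LinearMap.comp_apply]
      calc B (J x (T y)) z = R (T y) x x z := hJ _ _ _
        _ = R y x x (T z) := h _ _ _
        _ = B (J x y) (T z) := (hJ _ _ _).symm
        _ = B (T (J x y)) z := (hT _ _).symm
  -- from the single transfer law slot1 → slot4, all of (3) follows
  have h3ofs14 : (∀ x y z w, R (T x) y z w = R x y z (T w)) →
      (∀ x y z w, R (T x) y z w = R x (T y) z w ∧ R x (T y) z w = R x y (T z) w ∧
        R x y (T z) w = R x y z (T w)) := by
    intro s14 x y z w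
    have s12 : R x (T y) z w = R x y z (T w) := by
      linarith [s14 y x z w, hR1 (T y) x z w, hR1 y x z (T w)]
    have s34 : R x y (T z) w = R x y z (T w) := by
      linarith [hR2 x y (T z) w, s14 z w x y, hR2 z w x (T y), s12]
    exact ⟨(s14 x y z w).trans s12.symm, s12.trans s34.symm, s34⟩
  -- (1) implies the transfer law, by an explicit certificate
  have s14of1 : (∀ x y z w, R x y (T z) w = R x y z (T w)) →
      ∀ x y z w, R (T x) y z w = R x y z (T w) := by
    intro h1 x y z w
    linear_combination (1/2 : ℝ) * hR2 (T x) y z w + (1/2 : ℝ) * hR3 (T x) y z w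
      - (1/2 : ℝ) * hR1 (T x) z y w + (1/2 : ℝ) * hR2 (T x) z y w
      - (1/2 : ℝ) * hR2 x (T y) z w + (1/2 : ℝ) * hR3 x (T y) z w
      - (1/2 : ℝ) * hR1 x z (T y) w + (1/2 : ℝ) * hR2 x w (T y) z
      - (1/2 : ℝ) * hR3 x y (T z) w + (1/2 : ℝ) * hR1 x (T z) y w
      - (1/2 : ℝ) * hR2 x (T z) y w - (1/2 : ℝ) * hR2 x w y (T z)
      - (1/2 : ℝ) * hR3 x y z (T w) + (1/2 : ℝ) * hR1 x z y (T w)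
      + (1/2 : ℝ) * h1 x y z w + (1/2 : ℝ) * h1 x z y w - (1/2 : ℝ) * h1 x w y z
      - (1/2 : ℝ) * h1 y z x w + (1/2 : ℝ) * h1 y w x z + (1/2 : ℝ) * h1 z w x y
  -- (2) implies the transfer law, via polarization and an explicit certificate
  have s14of2 : (∀ x y z, R (T y) x x z = R y x x (T z)) →
      ∀ x y z w, R (T x) y z w = R x y z (T w) := by
    intro h2
    have pol : ∀ x y z w, R (T y) x z w + R (T y) z x w
        = R y x z (T w) + R y z x (T w) := by
      intro x y z w
      have ha := h2 (x + z) y w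
      have hb := h2 x y w
      have hc := h2 z y w
      simp only [map_add, LinearMap.add_apply] at ha
      linarith
    intro x y z w
    linear_combination (1/2 : ℝ) * hR3 (T x) y z w + (1/3 : ℝ) * hR1 (T x) y w z
      - (1/6 : ℝ) * hR2 (T x) y w z - (1/2 : ℝ) * hR1 (T x) z y w
      + (1/6 : ℝ) * hR1 (T x) z w y - (1/3 : ℝ) * hR2 (T x) z w y
      + (1/2 : ℝ) * hR2 (T x) w y z - (1/6 : ℝ) * hR3 (T x) w z y
      - (1/3 : ℝ) * hR3 y (T x) w z
      + (1/6 : ℝ) * hR1 x (T y) z w - (1/6 : ℝ) * hR2 x (T y) z w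
      - (1/6 : ℝ) * hR1 x (T y) w z + (1/6 : ℝ) * hR3 x (T y) w z
      + (1/3 : ℝ) * hR2 x z w (T y) - (1/6 : ℝ) * hR3 x z w (T y)
      - (1/6 : ℝ) * hR1 x w (T y) z - (1/6 : ℝ) * hR2 x w (T y) z
      + (1/3 : ℝ) * hR3 x w (T y) z + (1/6 : ℝ) * hR1 x w z (T y)
      + (1/6 : ℝ) * hR1 x y (T z) w - (1/6 : ℝ) * hR3 x y (T z) w
      - (1/6 : ℝ) * hR1 x y w (T z) + (1/6 : ℝ) * hR2 x (T z) y w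
      - (1/6 : ℝ) * hR3 x (T z) y w - (1/6 : ℝ) * hR2 x w y (T z)
      - (1/3 : ℝ) * hR1 x y z (T w) - (1/6 : ℝ) * hR3 x y z (T w)
      + (1/3 : ℝ) * hR1 x z y (T w) + (1/6 : ℝ) * hR3 x z y (T w)
      + (1/2 : ℝ) * pol y x z w - (1/6 : ℝ) * pol y x w z + (1/6 : ℝ) * pol z x w y
      - (1/6 : ℝ) * pol x y z w - (1/6 : ℝ) * pol x y w z + (1/6 : ℝ) * pol x z y w
  -- scalar equivalences with (3)
  have e1 : (∀ x y z w, R x y (T z) w = R x y z (T w)) ↔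
      (∀ x y z w, R (T x) y z w = R x (T y) z w ∧ R x (T y) z w = R x y (T z) w ∧
        R x y (T z) w = R x y z (T w)) :=
    ⟨fun h => h3ofs14 (s14of1 h), fun h x y z w => (h x y z w).2.2⟩
  have e2 : (∀ x y z, R (T y) x x z = R y x x (T z)) ↔
      (∀ x y z w, R (T x) y z w = R x (T y) z w ∧ R x (T y) z w = R x y (T z) w ∧
        R x y (T z) w = R x y z (T w)) :=
    ⟨fun h => h3ofs14 (s14of2 h),
     fun h x y z => ((h y x x z).1.trans (h y x x z).2.1).trans (h y x x z).2.2⟩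
  exact ⟨(bridgeR.trans (e1.trans e2.symm)).trans bridgeJ.symm, bridgeJ.trans e2⟩
end

section
/- If 𝔐 = (V, ⟨·,·⟩, R) is a Riemannian model which is Jacobi–Tsankov, then R = 0. -/
/-!
Each Jacobi operator `J x` is self-adjoint and kills `x`, so commutativity gives
`J x (J y x) = J y (J x x) = 0`. Polarizing this in `x` yields `J a ∘ J a = 0`; a self-adjoint
operator with vanishing square on a positive definite space is zero, so every `J a` vanishes,
i.e. `R u a a v = 0`. Polarizing once more makes `R` skew in its middle pair, and together with
the first Bianchi identity this forces `R = 0`.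
-/

section

variable {V : Type*} [AddCommGroup V] [Module ℝ V]

section PositiveForm

variable {B : V →ₗ[ℝ] V →ₗ[ℝ] ℝ}

theorem eq_zero_of_forall_apply_eq_zero (hBpos : ∀ x, x ≠ 0 → 0 < B x x) {w : V}
    (h : ∀ v, B w v = 0) : w = 0 := by
  by_contra hw
  exact (hBpos w hw).ne' (h w)

theorem eq_zero_of_symm_of_comp_self_eq_zero (hBpos : ∀ x, x ≠ 0 → 0 < B x x)
    {T : V →ₗ[ℝ] V} (hT : ∀ u v, B (T u) v = B (T v) u) (hTT : T ∘ₗ T = 0) : T = 0 := by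
  ext u
  by_contra hu
  have hTTu : T (T u) = 0 := by rw [← LinearMap.comp_apply, hTT, LinearMap.zero_apply]
  exact (hBpos _ hu).ne' (by rw [hT, hTTu, map_zero, LinearMap.zero_apply])

end PositiveForm

section Curvature

variable {R : V →ₗ[ℝ] V →ₗ[ℝ] V →ₗ[ℝ] V →ₗ[ℝ] ℝ}

theorem curv_apply_self_left (hR1 : ∀ x y z w, R x y z w = -R y x z w) (x z w : V) :
    R x x z w = 0 := by
  linarith [hR1 x x z w]

theorem curv_apply_mid_symm (hR1 : ∀ x y z w, R x y z w = -R y x z w)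
    (hR2 : ∀ x y z w, R x y z w = R z w x y) (u a v : V) :
    R u a a v = R v a a u := by
  rw [hR2 u a a v, hR1 a v u a, hR2 v a u a, hR2 v a a u, hR1 a u v a]

theorem curv_parallelogram (w a b v : V) :
    R w (a + b) (a + b) v + R w (a - b) (a - b) v = 2 * (R w a a v + R w b b v) := by
  simp only [map_add, map_sub, LinearMap.add_apply, LinearMap.sub_apply]
  ring

theorem curv_eq_zero_of_forall_apply_mid_self (hR1 : ∀ x y z w, R x y z w = -R y x z w)
    (hR3 : ∀ x y z w, R x y z w + R y z x w + R z x y w = 0)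
    (h : ∀ u a v, R u a a v = 0) (x y z w : V) : R x y z w = 0 := by
  have mid_skew : ∀ u a b v, R u a b v = -R u b a v := by
    intro u a b v
    have hab := h u (a + b) v
    simp only [map_add, LinearMap.add_apply] at hab
    linarith [h u a v, h u b v]
  have bianchi := hR3 x y z w
  rw [mid_skew y z x w, hR1 y x z w, hR1 z x y w, mid_skew x z y w] at bianchi
  linarith

end Curvature

section Jacobi

variable {B : V →ₗ[ℝ] V →ₗ[ℝ] ℝ} {R : V →ₗ[ℝ] V →ₗ[ℝ] V →ₗ[ℝ] V →ₗ[ℝ] ℝ}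
  {J : V → V →ₗ[ℝ] V}

theorem jacobi_apply_self (hBpos : ∀ x, x ≠ 0 → 0 < B x x)
    (hR1 : ∀ x y z w, R x y z w = -R y x z w) (hJ : ∀ x y z, B (J x y) z = R y x x z) (x : V) :
    J x x = 0 :=
  eq_zero_of_forall_apply_eq_zero hBpos fun v => by rw [hJ, curv_apply_self_left hR1]

theorem jacobi_symm (hR1 : ∀ x y z w, R x y z w = -R y x z w)
    (hR2 : ∀ x y z w, R x y z w = R z w x y) (hJ : ∀ x y z, B (J x y) z = R y x x z)
    (a u v : V) : B (J a u) v = B (J a v) u := by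
  rw [hJ, hJ, curv_apply_mid_symm hR1 hR2]

variable (hBpos : ∀ x, x ≠ 0 → 0 < B x x) (hR1 : ∀ x y z w, R x y z w = -R y x z w)
  (hJ : ∀ x y z, B (J x y) z = R y x x z) (hJT : ∀ x y, (J x) ∘ₗ (J y) = (J y) ∘ₗ (J x))
include hBpos hR1 hJ hJT

theorem jacobi_apply_jacobi_apply_self (x y : V) : J x (J y x) = 0 := by
  rw [← LinearMap.comp_apply, hJT, LinearMap.comp_apply, jacobi_apply_self hBpos hR1 hJ,
    map_zero]

theorem jacobi_comp_self (a : V) : J a ∘ₗ J a = 0 := by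
  ext b
  refine eq_zero_of_forall_apply_eq_zero hBpos fun v => ?_
  have hR_Jax : ∀ x, R (J a x) x x v = 0 := fun x => by
    rw [← hJ, jacobi_apply_jacobi_apply_self hBpos hR1 hJ hJT, map_zero, LinearMap.zero_apply]
  have hJaa := jacobi_apply_self hBpos hR1 hJ a
  -- `J a (b ± a) = J a b`, so the parallelogram law isolates `R (J a b) a a v`.
  have h_add := hR_Jax (b + a)
  have h_sub := hR_Jax (b - a)
  rw [show J a (b + a) = J a b by rw [map_add, hJaa, add_zero]] at h_add
  rw [show J a (b - a) = J a b by rw [map_sub, hJaa, sub_zero]] at h_sub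
  rw [LinearMap.comp_apply, hJ]
  linarith [curv_parallelogram (R := R) (J a b) b a v, hR_Jax b]

end Jacobi

end

theorem stmt1_general {V : Type*} [AddCommGroup V] [Module ℝ V]
    (B : V →ₗ[ℝ] V →ₗ[ℝ] ℝ)
    (hBpos : ∀ x, x ≠ 0 → 0 < B x x)
    (R : V →ₗ[ℝ] V →ₗ[ℝ] V →ₗ[ℝ] V →ₗ[ℝ] ℝ)
    (hR1 : ∀ x y z w, R x y z w = -R y x z w)
    (hR2 : ∀ x y z w, R x y z w = R z w x y)
    (hR3 : ∀ x y z w, R x y z w + R y z x w + R z x y w = 0)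
    (J : V → V →ₗ[ℝ] V)
    (hJ : ∀ x y z, B (J x y) z = R y x x z)
    (hJT : ∀ x y, (J x) ∘ₗ (J y) = (J y) ∘ₗ (J x)) :
    ∀ x y z w, R x y z w = 0 := by
  have jacobi_eq_zero : ∀ a, J a = 0 := fun a =>
    eq_zero_of_symm_of_comp_self_eq_zero hBpos (jacobi_symm hR1 hR2 hJ a)
      (jacobi_comp_self hBpos hR1 hJ hJT a)
  refine curv_eq_zero_of_forall_apply_mid_self hR1 hR3 fun u a v => ?_
  rw [← hJ, jacobi_eq_zero, LinearMap.zero_apply, map_zero, LinearMap.zero_apply]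

/-- A Riemannian Jacobi–Tsankov model has R = 0. -/
theorem stmt1 {V : Type*} [AddCommGroup V] [Module ℝ V] [FiniteDimensional ℝ V]
    (B : V →ₗ[ℝ] V →ₗ[ℝ] ℝ)
    (hBsymm : ∀ x y, B x y = B y x)
    (hBpos : ∀ x, x ≠ 0 → 0 < B x x)
    (R : V →ₗ[ℝ] V →ₗ[ℝ] V →ₗ[ℝ] V →ₗ[ℝ] ℝ)
    (hR1 : ∀ x y z w, R x y z w = -R y x z w)
    (hR2 : ∀ x y z w, R x y z w = R z w x y)
    (hR3 : ∀ x y z w, R x y z w + R y z x w + R z x y w = 0)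
    (J : V → V →ₗ[ℝ] V)
    (hJ : ∀ x y z, B (J x y) z = R y x x z)
    (hJT : ∀ x y, (J x) ∘ₗ (J y) = (J y) ∘ₗ (J x)) :
    ∀ x y z w, R x y z w = 0 :=
  stmt1_general B hBpos R hR1 hR2 hR3 J hJ hJT
end

section
/- If a model 𝔐 = (V, ⟨·,·⟩, R) (of arbitrary signature) is Jacobi–Tsankov, then J(x)² = 0 for every x ∈ V. -/
/-- If a model (of arbitrary signature) is Jacobi–Tsankov,
then J(x)² = 0 for every x. -/
theorem stmt4 {V : Type*} [AddCommGroup V] [Module ℝ V] [FiniteDimensional ℝ V]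
    (B : V →ₗ[ℝ] V →ₗ[ℝ] ℝ)
    (hBsymm : ∀ x y, B x y = B y x)
    (hBnd : ∀ x, (∀ y, B x y = 0) → x = 0)
    (R : V →ₗ[ℝ] V →ₗ[ℝ] V →ₗ[ℝ] V →ₗ[ℝ] ℝ)
    (hR1 : ∀ x y z w, R x y z w = -R y x z w)
    (hR2 : ∀ x y z w, R x y z w = R z w x y)
    (hR3 : ∀ x y z w, R x y z w + R y z x w + R z x y w = 0)
    (J : V → V →ₗ[ℝ] V)
    (hJ : ∀ x y z, B (J x y) z = R y x x z)
    (hJT : ∀ x y, (J x) ∘ₗ (J y) = (J y) ∘ₗ (J x)) :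
    ∀ x, (J x) ∘ₗ (J x) = 0 := by
  have hJxx : ∀ x, J x x = 0 := by
    intro x
    apply hBnd
    intro z
    have h := hR1 x x x z
    rw [hJ]
    linarith
  have hJyx : ∀ x y, J x (J y x) = 0 := by
    intro x y
    have h := congrFun (congrArg DFunLike.coe (hJT x y)) x
    simp only [LinearMap.comp_apply] at h
    rw [h, hJxx, map_zero]
  set K : V → V → (V →ₗ[ℝ] V) := fun x w => J (x + w) - J x - J w with hKdef
  have hKB : ∀ x w y z, B (K x w y) z = R y x w z + R y w x z := by
    intro x w y z
    simp only [hKdef, LinearMap.sub_apply, map_sub, LinearMap.sub_apply]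
    rw [hJ, hJ, hJ]
    simp only [map_add, LinearMap.add_apply]
    ring
  have hE : ∀ x w, J x (J x w) + K x w (J x w) = 0 := by
    intro x w
    have h0 : J (x + w) (J x (x + w)) = 0 := hJyx (x + w) x
    have h1 : J x (x + w) = J x w := by rw [map_add, hJxx, zero_add]
    rw [h1] at h0
    have h2 : J (x + w) = J x + J w + K x w := by
      simp only [hKdef]; abel
    rw [h2] at h0
    simp only [LinearMap.add_apply] at h0
    rw [hJyx w x] at h0
    rw [show J x (J x w) + 0 + K x w (J x w) = J x (J x w) + K x w (J x w) by abel] at h0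
    exact h0
  intro x
  ext w
  simp only [LinearMap.comp_apply, LinearMap.zero_apply]
  have e1 := hE x w
  have e2 := hE x (w + w)
  rw [show J x (w + w) = J x w + J x w from map_add _ _ _] at e2
  rw [map_add, map_add] at e2
  apply hBnd
  intro z
  have f1 := congrArg (fun v => B v z) e1
  have f2 := congrArg (fun v => B v z) e2
  simp only [map_add, LinearMap.add_apply, map_zero, LinearMap.zero_apply] at f1 f2
  have hk : B (K x (w + w) (J x w)) z = B (K x w (J x w)) z + B (K x w (J x w)) z := by
    rw [hKB, hKB]
    simp only [map_add, LinearMap.add_apply]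
    ring
  rw [hk] at f2
  linarith
end

section
/- Let 𝔐 = (V, ⟨·,·⟩, R) be a model for which there exist totally isotropic subspaces U and Ū of V with V = U ⊕ Ū such that R(x,y,z,w) = 0 whenever at least one of the arguments lies in Ū. Then: 𝓡(x,y)z ∈ Ū for all x,y,z ∈ V; 𝓡(x,y)∘𝓡(u,v) = 0 for all x,y,u,v ∈ V (in particular 𝔐 is skew-Tsankov); and J(x)∘J(y) = 0 for all x,y ∈ V. -/
/-- If V = U ⊕ Ū with U, Ū totally isotropic and R vanishing whenever one
argument lies in Ū, then 𝓡(x,y)z ∈ Ū, 𝓡(x,y)∘𝓡(u,v) = 0 (so 𝔐 is skew-Tsankov),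
and J(x)∘J(y) = 0. -/
theorem stmt7 {V : Type*} [AddCommGroup V] [Module ℝ V] [FiniteDimensional ℝ V]
    (B : V →ₗ[ℝ] V →ₗ[ℝ] ℝ)
    (hBsymm : ∀ x y, B x y = B y x)
    (hBnd : ∀ x, (∀ y, B x y = 0) → x = 0)
    (R : V →ₗ[ℝ] V →ₗ[ℝ] V →ₗ[ℝ] V →ₗ[ℝ] ℝ)
    (hR1 : ∀ x y z w, R x y z w = -R y x z w)
    (hR2 : ∀ x y z w, R x y z w = R z w x y)
    (hR3 : ∀ x y z w, R x y z w + R y z x w + R z x y w = 0)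
    (Rop : V → V → V →ₗ[ℝ] V)
    (hRop : ∀ x y z w, B (Rop x y z) w = R x y z w)
    (J : V → V →ₗ[ℝ] V)
    (hJ : ∀ x y z, B (J x y) z = R y x x z)
    (U Ubar : Submodule ℝ V)
    (hU : ∀ u ∈ U, ∀ u' ∈ U, B u u' = 0)
    (hUbar : ∀ u ∈ Ubar, ∀ u' ∈ Ubar, B u u' = 0)
    (hcompl : IsCompl U Ubar)
    (hRvan : ∀ x y z w : V, (x ∈ Ubar ∨ y ∈ Ubar ∨ z ∈ Ubar ∨ w ∈ Ubar) → R x y z w = 0) :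
    (∀ x y z : V, Rop x y z ∈ Ubar) ∧
    (∀ x y u v : V, (Rop x y) ∘ₗ (Rop u v) = 0) ∧
    (∀ x₁ x₂ x₃ x₄ : V, (Rop x₁ x₂) ∘ₗ (Rop x₃ x₄) = (Rop x₃ x₄) ∘ₗ (Rop x₁ x₂)) ∧
    (∀ x y : V, (J x) ∘ₗ (J y) = 0) := by

  -- Any vector B-orthogonal to all of Ubar lies in Ubar.
  have key : ∀ v : V, (∀ w ∈ Ubar, B v w = 0) → v ∈ Ubar := by
    intro v hv
    have hv' : v ∈ U ⊔ Ubar := by rw [hcompl.sup_eq_top]; trivial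
    obtain ⟨u, hu, ub, hub, huv⟩ := Submodule.mem_sup.mp hv'
    have hu0 : u = 0 := by
      apply hBnd
      intro w
      have hw' : w ∈ U ⊔ Ubar := by rw [hcompl.sup_eq_top]; trivial
      obtain ⟨w1, hw1, w2, hw2, hw⟩ := Submodule.mem_sup.mp hw'
      have h1 : B u w1 = 0 := hU u hu w1 hw1
      have h2 : B u w2 = 0 := by
        have ha : B v w2 = 0 := hv w2 hw2
        have hb : B ub w2 = 0 := hUbar ub hub w2 hw2
        have hc : B u w2 + B ub w2 = B v w2 := by
          rw [← huv]; simp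
        linarith
      rw [← hw]; simp [h1, h2]
    have : v = ub := by rw [← huv, hu0, zero_add]
    rw [this]; exact hub
  have memUbar : ∀ x y z : V, Rop x y z ∈ Ubar := by
    intro x y z
    apply key
    intro w hw
    rw [hRop]
    exact hRvan x y z w (Or.inr (Or.inr (Or.inr hw)))
  have hRopZ : ∀ x y : V, ∀ z ∈ Ubar, Rop x y z = 0 := by
    intro x y z hz
    apply hBnd
    intro w
    rw [hRop]
    exact hRvan x y z w (Or.inr (Or.inr (Or.inl hz)))
  have hcomp0 : ∀ x y u v : V, (Rop x y) ∘ₗ (Rop u v) = 0 := by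
    intro x y u v
    ext z
    simp only [LinearMap.comp_apply, LinearMap.zero_apply]
    exact hRopZ x y _ (memUbar u v z)
  have memUbarJ : ∀ x z : V, J x z ∈ Ubar := by
    intro x z
    apply key
    intro w hw
    rw [hJ]
    exact hRvan z x x w (Or.inr (Or.inr (Or.inr hw)))
  have hJZ : ∀ x : V, ∀ z ∈ Ubar, J x z = 0 := by
    intro x z hz
    apply hBnd
    intro w
    rw [hJ]
    exact hRvan z x x w (Or.inl hz)
  refine ⟨memUbar, hcomp0, fun a b c d => by rw [hcomp0, hcomp0], ?_⟩
  intro x y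
  ext z
  simp only [LinearMap.comp_apply, LinearMap.zero_apply]
  exact hJZ x _ (memUbarJ y z)
end

section
/- Let 𝔐 = (V, ⟨·,·⟩, R) be a Riemannian model which is skew-Tsankov. Then there is an orthogonal direct sum decomposition V = V₁ ⊕ ⋯ ⊕ V_k ⊕ U, where each Vᵢ is 2-dimensional and the summands are pairwise orthogonal, such that R(x,y,z,w) = 0 unless all four arguments x,y,z,w lie in one and the same subspace Vᵢ (in particular R vanishes whenever one of its arguments lies in U). -/
/-!
The curvature operators `𝓡(x, y)` are skew-adjoint and, by hypothesis, commute pairwise. On a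
minimal invariant subspace `q` of such a family every product `A C` is symmetric and commutes with
the family, so it acts on `q` as a scalar. Hence if `A x ≠ 0` for some `x ∈ q`, then `A` is
invertible on `q` and `span {x, A x}` is invariant, i.e. equals `q`: minimal invariant subspaces
are either killed by the family or are planes. Since orthogonal complements of invariant subspaces
are invariant, induction on the dimension splits `V` orthogonally into invariant planes `Vᵢ` and
the joint kernel `U`. Then `R(x, y, z, w) = ⟨𝓡(x, y) z, w⟩` vanishes unless `z, w` lie in a common
`Vᵢ`, by pair symmetry also unless `x, y` do, and the Bianchi identity disposes of the remaining
case `x, y ∈ Vᵢ`, `z, w ∈ Vⱼ`, `i ≠ j`.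
-/

open Module Submodule RealInnerProductSpace

section SkewCommuting

variable {E : Type*} [NormedAddCommGroup E] [InnerProductSpace ℝ E]

lemma orthogonal_mem_invtSubmodule_of_skew {A : End ℝ E} (hA : ∀ x y, ⟪A x, y⟫ = -⟪x, A y⟫)
    {q : Submodule ℝ E} (hq : q ∈ A.invtSubmodule) : qᗮ ∈ A.invtSubmodule := by
  rw [End.mem_invtSubmodule_iff_forall_mem_of_mem] at hq ⊢
  intro x hx u hu
  have := hx (A u) (hq u hu)
  linarith [hA u x]

lemma isSymmetric_mul_of_skew {A C : End ℝ E} (hA : ∀ x y, ⟪A x, y⟫ = -⟪x, A y⟫)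
    (hC : ∀ x y, ⟪C x, y⟫ = -⟪x, C y⟫) (hAC : Commute A C) : (A * C).IsSymmetric := by
  intro x y
  rw [End.mul_apply, hA, hC, neg_neg, ← End.mul_apply C A, ← hAC.eq, End.mul_apply]

lemma LinearMap.IsSymmetric.exists_eigenvector_mem [FiniteDimensional ℝ E] {S : End ℝ E}
    (hS : S.IsSymmetric) {q : Submodule ℝ E} (hq : q ∈ S.invtSubmodule) (hq0 : q ≠ ⊥) :
    ∃ c : ℝ, ∃ x ∈ q, x ≠ 0 ∧ S x = c • x := by
  have : Nontrivial q := Submodule.nontrivial_iff_ne_bot.mpr hq0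
  rw [End.mem_invtSubmodule_iff_forall_mem_of_mem] at hq
  obtain ⟨c, hc⟩ : ∃ c, End.HasEigenvalue (S.restrict hq) c :=
    ⟨_, (hS.restrict_invariant hq).hasEigenvalue_iSup_of_finiteDimensional⟩
  obtain ⟨x, hx⟩ := hc.exists_hasEigenvector
  refine ⟨c, x, x.2, by simpa using hx.2, ?_⟩
  simpa using congrArg Subtype.val (End.mem_eigenspace_iff.mp hx.1)

lemma finrank_span_apply_eq_two {A : End ℝ E} (hA : ∀ x y, ⟪A x, y⟫ = -⟪x, A y⟫) {x : E}
    (hAx : A x ≠ 0) : finrank ℝ (span ℝ (Set.range ![x, A x])) = 2 := by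
  have hx0 : x ≠ 0 := fun h => hAx (h ▸ map_zero A)
  have hxAx : ⟪x, A x⟫ = 0 := by linarith [hA x x, real_inner_comm x (A x)]
  have hAxx : ⟪A x, x⟫ = 0 := by rw [real_inner_comm, hxAx]
  rw [finrank_span_eq_card]
  · simp
  refine linearIndependent_of_ne_zero_of_inner_eq_zero (Fin.forall_fin_two.mpr ⟨hx0, hAx⟩) ?_
  intro i j hij
  fin_cases i <;> fin_cases j <;> simp [hxAx, hAxx] at hij ⊢

variable {𝔄 : Set (End ℝ E)}

variable (𝔄) in
def IsNonzeroInvariant (p : Submodule ℝ E) : Prop := p ≠ ⊥ ∧ ∀ A ∈ 𝔄, p ∈ A.invtSubmodule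

lemma exists_eq_smul_of_minimal [FiniteDimensional ℝ E] {q : Submodule ℝ E}
    (hq : Minimal (IsNonzeroInvariant 𝔄) q) {S : End ℝ E}
    (hS : S.IsSymmetric) (hSq : q ∈ S.invtSubmodule) (hcomm : ∀ A ∈ 𝔄, Commute A S) :
    ∃ c : ℝ, ∀ x ∈ q, S x = c • x := by
  obtain ⟨c, x, hxq, hx0, hx⟩ := hS.exists_eigenvector_mem hSq hq.prop.1
  have hinv : ∀ A ∈ 𝔄, End.eigenspace S c ∈ A.invtSubmodule := by
    intro A hA
    rw [End.mem_invtSubmodule_iff_forall_mem_of_mem]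
    intro y hy
    rw [End.mem_eigenspace_iff] at hy ⊢
    rw [← End.mul_apply, ← (hcomm A hA).eq, End.mul_apply, hy, map_smul]
  have hle := hq.le_of_le (y := q ⊓ End.eigenspace S c)
    ⟨(Submodule.ne_bot_iff _).mpr ⟨x, ⟨hxq, End.mem_eigenspace_iff.mpr hx⟩, hx0⟩,
      fun A hA => End.invtSubmodule.inf_mem (hq.prop.2 A hA) (hinv A hA)⟩ inf_le_left
  exact ⟨c, fun y hy => End.mem_eigenspace_iff.mp (hle hy).2⟩

lemma span_apply_mem_invtSubmodule_of_minimal [FiniteDimensional ℝ E]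
    (hskew : ∀ A ∈ 𝔄, ∀ x y, ⟪A x, y⟫ = -⟪x, A y⟫) (hcomm : ∀ A ∈ 𝔄, ∀ C ∈ 𝔄, Commute A C)
    {q : Submodule ℝ E} (hq : Minimal (IsNonzeroInvariant 𝔄) q)
    {A : End ℝ E} (hA : A ∈ 𝔄) {x : E} (hxq : x ∈ q) (hAx : A x ≠ 0) {C : End ℝ E}
    (hC : C ∈ 𝔄) : span ℝ (Set.range ![x, A x]) ∈ C.invtSubmodule := by
  have hscalar : ∀ D ∈ 𝔄, ∃ c : ℝ, ∀ y ∈ q, A (D y) = c • y := fun D hD =>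
    exists_eq_smul_of_minimal hq
      (isSymmetric_mul_of_skew (hskew A hA) (hskew D hD) (hcomm A hA D hD))
      (End.invtSubmodule.comp _ (hq.prop.2 A hA) (hq.prop.2 D hD))
      (fun F hF => (hcomm F hF A hA).mul_right (hcomm F hF D hD))
  obtain ⟨μ, hμ⟩ := hscalar A hA
  obtain ⟨c, hc⟩ := hscalar C hC
  have hμ0 : μ ≠ 0 := by
    rintro rfl
    have := hskew A hA (A x) x
    rw [hμ x hxq, zero_smul, inner_zero_left, eq_comm, neg_eq_zero, inner_self_eq_zero] at this
    exact hAx this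
  -- `A` is invertible on `q`, as `A * A = μ`, so `C x` is read off from `A (C x) = c • x`
  have hCx : C x = (c / μ) • A x := by
    have h := hμ (C x) (hq.prop.2 C hC hxq)
    rw [hc x hxq, map_smul] at h
    rw [div_eq_inv_mul, mul_smul, h, smul_smul, inv_mul_cancel₀ hμ0, one_smul]
  have hCAx : C (A x) = c • x := by
    rw [← End.mul_apply, ← (hcomm A hA C hC).eq, End.mul_apply, hc x hxq]
  rw [End.mem_invtSubmodule, span_le, Set.range_subset_iff, Fin.forall_fin_two]
  constructor
  · simpa [hCx] using (span ℝ (Set.range ![x, A x])).smul_mem (c / μ)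
      (subset_span (Set.mem_range_self 1))
  · simpa [hCAx] using (span ℝ (Set.range ![x, A x])).smul_mem c
      (subset_span (Set.mem_range_self 0))

lemma finrank_eq_two_of_minimal [FiniteDimensional ℝ E]
    (hskew : ∀ A ∈ 𝔄, ∀ x y, ⟪A x, y⟫ = -⟪x, A y⟫) (hcomm : ∀ A ∈ 𝔄, ∀ C ∈ 𝔄, Commute A C)
    {q : Submodule ℝ E} (hq : Minimal (IsNonzeroInvariant 𝔄) q)
    {A : End ℝ E} (hA : A ∈ 𝔄) {x : E} (hxq : x ∈ q) (hAx : A x ≠ 0) :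
    finrank ℝ q = 2 := by
  have hx0 : x ≠ 0 := fun h => hAx (h ▸ map_zero A)
  have hspan : span ℝ (Set.range ![x, A x]) = q := hq.eq_of_le
    ⟨(Submodule.ne_bot_iff _).mpr ⟨x, subset_span ⟨0, rfl⟩, hx0⟩,
      fun C hC => span_apply_mem_invtSubmodule_of_minimal hskew hcomm hq hA hxq hAx hC⟩
    (span_le.mpr (Set.range_subset_iff.mpr (Fin.forall_fin_two.mpr ⟨hxq, hq.prop.2 A hA hxq⟩)))
  rw [← hspan, finrank_span_apply_eq_two (hskew A hA) hAx]

variable (𝔄) in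
structure IsBlockDecomposition (q : Submodule ℝ E) (blocks : Finset (Submodule ℝ E))
    (U : Submodule ℝ E) : Prop where
  finrank_eq_two : ∀ W ∈ blocks, finrank ℝ W = 2
  pairwise_isOrtho : (blocks : Set (Submodule ℝ E)).Pairwise (· ⟂ ·)
  isOrtho_kernel : ∀ W ∈ blocks, W ⟂ U
  sup_eq : blocks.sup id ⊔ U = q
  mem_invtSubmodule : ∀ A ∈ 𝔄, ∀ W ∈ blocks, W ∈ A.invtSubmodule
  le_ker : ∀ A ∈ 𝔄, U ≤ LinearMap.ker A

namespace IsBlockDecomposition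

variable {q q' U U' : Submodule ℝ E} {s s' : Finset (Submodule ℝ E)} {A : End ℝ E} {z w : E}

lemma of_le_ker (hq : ∀ A ∈ 𝔄, q ≤ LinearMap.ker A) : IsBlockDecomposition 𝔄 q ∅ q where
  finrank_eq_two := by simp
  pairwise_isOrtho := by simp
  isOrtho_kernel := by simp
  sup_eq := by simp
  mem_invtSubmodule := by simp
  le_ker := hq

lemma singleton (hq : finrank ℝ q = 2) (hinv : ∀ A ∈ 𝔄, q ∈ A.invtSubmodule) :
    IsBlockDecomposition 𝔄 q {q} ⊥ where
  finrank_eq_two := by simpa using hq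
  pairwise_isOrtho := by simp
  isOrtho_kernel := by simp
  sup_eq := by simp
  mem_invtSubmodule := by simpa using hinv
  le_ker := by simp

lemma le_of_mem (h : IsBlockDecomposition 𝔄 q s U) {W : Submodule ℝ E} (hW : W ∈ s) : W ≤ q :=
  h.sup_eq ▸ le_sup_of_le_left (Finset.le_sup (f := id) hW)

lemma kernel_le (h : IsBlockDecomposition 𝔄 q s U) : U ≤ q :=
  h.sup_eq ▸ le_sup_right

lemma sup (h : IsBlockDecomposition 𝔄 q s U) (h' : IsBlockDecomposition 𝔄 q' s' U')
    (hqq' : q ⟂ q') : IsBlockDecomposition 𝔄 (q ⊔ q') (s ∪ s') (U ⊔ U') where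
  finrank_eq_two W hW := (Finset.mem_union.mp hW).elim (h.finrank_eq_two W) (h'.finrank_eq_two W)
  pairwise_isOrtho := by
    rw [Finset.coe_union, Set.pairwise_union]
    exact ⟨h.pairwise_isOrtho, h'.pairwise_isOrtho, fun W hW W' hW' _ =>
      ⟨hqq'.mono (h.le_of_mem hW) (h'.le_of_mem hW'),
        hqq'.symm.mono (h'.le_of_mem hW') (h.le_of_mem hW)⟩⟩
  isOrtho_kernel W hW := by
    rw [isOrtho_sup_right]
    rcases Finset.mem_union.mp hW with hW | hW
    · exact ⟨h.isOrtho_kernel W hW, hqq'.mono (h.le_of_mem hW) h'.kernel_le⟩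
    · exact ⟨hqq'.symm.mono (h'.le_of_mem hW) h.kernel_le, h'.isOrtho_kernel W hW⟩
  sup_eq := by rw [Finset.sup_union, sup_sup_sup_comm, h.sup_eq, h'.sup_eq]
  mem_invtSubmodule A hA W hW :=
    (Finset.mem_union.mp hW).elim (h.mem_invtSubmodule A hA W) (h'.mem_invtSubmodule A hA W)
  le_ker A hA := sup_le (h.le_ker A hA) (h'.le_ker A hA)

lemma inner_apply_eq_zero_of_ne (h : IsBlockDecomposition 𝔄 q s U) (hA : A ∈ 𝔄)
    {W W' : Submodule ℝ E} (hW : W ∈ s) (hW' : W' ∈ s) (hne : W ≠ W') (hz : z ∈ W)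
    (hw : w ∈ W') : ⟪A z, w⟫ = 0 :=
  isOrtho_iff_inner_eq.mp (h.pairwise_isOrtho hW hW' hne) _ (h.mem_invtSubmodule A hA W hW hz) _ hw

lemma inner_apply_eq_zero (h : IsBlockDecomposition 𝔄 q s U) (hA : A ∈ 𝔄)
    (hz : z ∈ U ∨ ∃ W ∈ s, z ∈ W) (hw : w ∈ U ∨ ∃ W ∈ s, w ∈ W)
    (hzw : ¬∃ W ∈ s, z ∈ W ∧ w ∈ W) : ⟪A z, w⟫ = 0 := by
  obtain hz | ⟨W, hW, hz⟩ := hz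
  · rw [h.le_ker A hA hz, inner_zero_left]
  obtain hw | ⟨W', hW', hw⟩ := hw
  · exact isOrtho_iff_inner_eq.mp (h.isOrtho_kernel W hW) _ (h.mem_invtSubmodule A hA W hW hz) _ hw
  exact h.inner_apply_eq_zero_of_ne hA hW hW' (by rintro rfl; exact hzw ⟨W, hW, hz, hw⟩) hz hw

theorem curvature_eq_zero {R : E → E → E → E → ℝ} (hR2 : ∀ x y z w, R x y z w = R z w x y)
    (hR3 : ∀ x y z w, R x y z w + R y z x w + R z x y w = 0) {Rop : E → E → End ℝ E}
    (hRop : ∀ x y z w, ⟪Rop x y z, w⟫ = R x y z w)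
    (h : IsBlockDecomposition (Set.range (Function.uncurry Rop)) q s U) {x y z w : E}
    (hx : x ∈ U ∨ ∃ W ∈ s, x ∈ W) (hy : y ∈ U ∨ ∃ W ∈ s, y ∈ W)
    (hz : z ∈ U ∨ ∃ W ∈ s, z ∈ W) (hw : w ∈ U ∨ ∃ W ∈ s, w ∈ W)
    (hxyzw : ¬∃ W ∈ s, x ∈ W ∧ y ∈ W ∧ z ∈ W ∧ w ∈ W) : R x y z w = 0 := by
  by_cases hzw : ∃ W ∈ s, z ∈ W ∧ w ∈ W
  swap
  · rw [← hRop]; exact h.inner_apply_eq_zero ⟨(x, y), rfl⟩ hz hw hzw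
  by_cases hxy : ∃ W ∈ s, x ∈ W ∧ y ∈ W
  swap
  · rw [hR2, ← hRop]; exact h.inner_apply_eq_zero ⟨(z, w), rfl⟩ hx hy hxy
  obtain ⟨W, hW, hxW, hyW⟩ := hxy
  obtain ⟨W', hW', hzW', hwW'⟩ := hzw
  have hne : W ≠ W' := by rintro rfl; exact hxyzw ⟨W, hW, hxW, hyW, hzW', hwW'⟩
  have hyzxw : R y z x w = 0 := by
    rw [← hRop]; exact h.inner_apply_eq_zero_of_ne ⟨(y, z), rfl⟩ hW hW' hne hxW hwW'
  have hzxyw : R z x y w = 0 := by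
    rw [← hRop]; exact h.inner_apply_eq_zero_of_ne ⟨(z, x), rfl⟩ hW hW' hne hyW hwW'
  linear_combination hR3 x y z w - hyzxw - hzxyw

end IsBlockDecomposition

theorem exists_isBlockDecomposition [FiniteDimensional ℝ E]
    (hskew : ∀ A ∈ 𝔄, ∀ x y, ⟪A x, y⟫ = -⟪x, A y⟫) (hcomm : ∀ A ∈ 𝔄, ∀ C ∈ 𝔄, Commute A C)
    {q : Submodule ℝ E} (hq : ∀ A ∈ 𝔄, q ∈ A.invtSubmodule) :
    ∃ s U, IsBlockDecomposition 𝔄 q s U := by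
  induction hn : finrank ℝ q using Nat.strong_induction_on generalizing q with
  | _ n ih =>
  by_cases hker : ∀ A ∈ 𝔄, q ≤ LinearMap.ker A
  · exact ⟨∅, q, .of_le_ker hker⟩
  by_cases hmin : Minimal (IsNonzeroInvariant 𝔄) q
  · obtain ⟨A, hA, hqA⟩ : ∃ A ∈ 𝔄, ¬q ≤ LinearMap.ker A := by simpa using hker
    obtain ⟨x, hxq, hAx⟩ := SetLike.not_le_iff_exists.mp hqA
    exact ⟨{q}, ⊥, .singleton (finrank_eq_two_of_minimal hskew hcomm hmin hA hxq hAx) hq⟩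
  have hq0 : q ≠ ⊥ := by rintro rfl; exact hker fun A _ => bot_le
  obtain ⟨p, hplt, hp0, hp⟩ := (not_minimal_iff_exists_lt ⟨hq0, hq⟩).mp hmin
  have hp' : ∀ A ∈ 𝔄, pᗮ ⊓ q ∈ A.invtSubmodule := fun A hA =>
    End.invtSubmodule.inf_mem (orthogonal_mem_invtSubmodule_of_skew (hskew A hA) (hp A hA))
      (hq A hA)
  have hpp' : p ⟂ pᗮ ⊓ q := (isOrtho_orthogonal_right p).mono_right inf_le_left
  have hlt : pᗮ ⊓ q < q := by
    refine lt_of_le_of_ne inf_le_right fun h => hp0 ?_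
    rw [← le_bot_iff, ← p.inf_orthogonal_eq_bot]
    exact le_inf le_rfl (hplt.le.trans (h.symm.le.trans inf_le_left))
  obtain ⟨s, U, h⟩ := ih _ (hn ▸ finrank_lt_finrank_of_lt hplt) hp rfl
  obtain ⟨s', U', h'⟩ := ih _ (hn ▸ finrank_lt_finrank_of_lt hlt) hp' rfl
  exact ⟨s ∪ s', U ⊔ U', sup_orthogonal_inf_of_hasOrthogonalProjection hplt.le ▸ h.sup h' hpp'⟩

end SkewCommuting

abbrev innerProductCoreOfPosDef {V : Type*} [AddCommGroup V] [Module ℝ V] (B : V →ₗ[ℝ] V →ₗ[ℝ] ℝ)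
    (hBsymm : ∀ x y, B x y = B y x) (hBpos : ∀ x, x ≠ 0 → 0 < B x x) :
    InnerProductSpace.Core ℝ V where
  inner x y := B x y
  conj_inner_symm x y := hBsymm y x
  re_inner_nonneg x := by
    rcases eq_or_ne x 0 with rfl | hx
    · simp
    · exact (hBpos x hx).le
  add_left := by simp
  smul_left := by simp
  definite x hx := by_contra fun h => (hBpos x h).ne' hx

/-- A Riemannian skew-Tsankov model decomposes as an orthogonal direct
sum V = V₁ ⊕ ⋯ ⊕ V_k ⊕ U with each Vᵢ of dimension 2, such that R vanishes unless all
four of its (pure) arguments lie in one and the same Vᵢ. -/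
theorem stmt10 {V : Type*} [AddCommGroup V] [Module ℝ V] [FiniteDimensional ℝ V]
    (B : V →ₗ[ℝ] V →ₗ[ℝ] ℝ)
    (hBsymm : ∀ x y, B x y = B y x)
    (hBpos : ∀ x, x ≠ 0 → 0 < B x x)
    (R : V →ₗ[ℝ] V →ₗ[ℝ] V →ₗ[ℝ] V →ₗ[ℝ] ℝ)
    (hR1 : ∀ x y z w, R x y z w = -R y x z w)
    (hR2 : ∀ x y z w, R x y z w = R z w x y)
    (hR3 : ∀ x y z w, R x y z w + R y z x w + R z x y w = 0)
    (Rop : V → V → V →ₗ[ℝ] V)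
    (hRop : ∀ x y z w, B (Rop x y z) w = R x y z w)
    (hST : ∀ x₁ x₂ x₃ x₄ : V, (Rop x₁ x₂) ∘ₗ (Rop x₃ x₄) = (Rop x₃ x₄) ∘ₗ (Rop x₁ x₂)) :
    ∃ (k : ℕ) (Vs : Fin k → Submodule ℝ V) (U : Submodule ℝ V),
      (∀ i, Module.finrank ℝ (Vs i) = 2) ∧
      (∀ i j, i ≠ j → ∀ x ∈ Vs i, ∀ y ∈ Vs j, B x y = 0) ∧
      (∀ i, ∀ x ∈ Vs i, ∀ y ∈ U, B x y = 0) ∧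
      ((⨆ i, Vs i) ⊔ U = ⊤) ∧
      (∀ x y z w : V,
        (x ∈ U ∨ ∃ i, x ∈ Vs i) → (y ∈ U ∨ ∃ i, y ∈ Vs i) →
        (z ∈ U ∨ ∃ i, z ∈ Vs i) → (w ∈ U ∨ ∃ i, w ∈ Vs i) →
        (¬ ∃ i, x ∈ Vs i ∧ y ∈ Vs i ∧ z ∈ Vs i ∧ w ∈ Vs i) →
        R x y z w = 0) := by
  let core := innerProductCoreOfPosDef B hBsymm hBpos
  let : NormedAddCommGroup V := core.toNormedAddCommGroup
  let : InnerProductSpace ℝ V := InnerProductSpace.ofCore core.toCore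
  have hskew : ∀ A ∈ Set.range (Function.uncurry Rop), ∀ x y, ⟪A x, y⟫ = -⟪x, A y⟫ := by
    rintro _ ⟨⟨a, b⟩, rfl⟩ x y
    show B (Rop a b x) y = -B x (Rop a b y)
    rw [hRop, hBsymm, hRop, hR2, hR1, hR2]
  obtain ⟨s, U, h⟩ := exists_isBlockDecomposition hskew
    (by rintro _ ⟨⟨a, b⟩, rfl⟩ _ ⟨⟨c, d⟩, rfl⟩; exact hST a b c d)
    (q := ⊤) fun A _ => End.invtSubmodule.top_mem A
  refine ⟨s.card, fun i => s.equivFin.symm i, U,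
    fun i => h.finrank_eq_two _ (s.equivFin.symm i).2,
    fun i j hij => isOrtho_iff_inner_eq.mp (h.pairwise_isOrtho (s.equivFin.symm i).2
      (s.equivFin.symm j).2 (by simpa using hij)),
    fun i => isOrtho_iff_inner_eq.mp (h.isOrtho_kernel _ (s.equivFin.symm i).2), ?_, ?_⟩
  · rw [← h.sup_eq, Finset.sup_id_eq_sSup, sSup_eq_iSup']
    exact congrArg (· ⊔ U) (s.equivFin.symm.iSup_comp (g := fun W : s => (W : Submodule ℝ V)))
  · have hblock : ∀ v, (v ∈ U ∨ ∃ i, v ∈ (s.equivFin.symm i : Submodule ℝ V)) →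
        v ∈ U ∨ ∃ W ∈ s, v ∈ W :=
      fun v => Or.imp_right fun ⟨i, hi⟩ => ⟨_, (s.equivFin.symm i).2, hi⟩
    intro x y z w hx hy hz hw hxyzw
    refine h.curvature_eq_zero hR2 hR3 hRop (hblock x hx) (hblock y hy) (hblock z hz)
      (hblock w hw) ?_
    rintro ⟨W, hW, hxyzwW⟩
    exact hxyzw ⟨s.equivFin ⟨W, hW⟩, by simpa using hxyzwW⟩
end

section
/- Let (V, ⟨·,·⟩, R) be a Riemannian model of dimension m whose Ricci operator equals s·id for some s ∈ ℝ. Let {e₁,…,e_m} be a ⟨·,·⟩-orthonormal basis of V. On U := V ⊕ V, writing x⁺ := (x,0) and x⁻ := (0,x) for x ∈ V, define the symmetric bilinear form ⟨·,·⟩' by ⟨x⁺,y⁺⟩' = ⟨x,y⟩, ⟨x⁻,y⁻⟩' = −⟨x,y⟩, ⟨x⁺,y⁻⟩' = 0, and define the multilinear map S : U⁴ → ℝ by S(x₁^{ε₁},x₂^{ε₂},x₃^{ε₃},x₄^{ε₄}) := 0 if the number of minus signs among ε₁,…,ε₄ is even, := R(x₁,x₂,x₃,x₄) if exactly one of the εᵢ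 is minus, and := −R(x₁,x₂,x₃,x₄) if exactly three of the εᵢ are minus. Then 𝔑 := (U, ⟨·,·⟩', S) is a model (⟨·,·⟩' is nondegenerate of signature (m,m) and S is an algebraic curvature tensor), 𝔑 is Jacobi–Videv, and its Ricci operator ρ_𝔑 satisfies ρ_𝔑² = −4s²·id. -/
/-!
Read `(x, y) ∈ V × V` as `x + i y` in the complexification of `V`. Then `S` is the imaginary part
of the complex-multilinear extension of `R`, so it inherits the curvature identities of `R`, and
multiplication by `-i`, `rot (x, y) = (y, -x)`, can be moved from one slot of `S` to another; it
is also self-adjoint for `⟨·,·⟩'`. The Einstein condition turns the Ricci operator into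
`2s · rot`, whence `ρ² = -4s²`. Finally, a Jacobi operator commutes with every self-adjoint map
that can be moved from the first to the last slot of the tensor: by nondegeneracy it suffices to
compare `⟨J(x) (T y), z⟩ = S(T y, x, x, z)` with `⟨T (J(x) y), z⟩ = S(y, x, x, T z)`.
-/

namespace LinearMap

variable {K M N : Type*} [CommRing K] [AddCommGroup M] [Module K M] [AddCommGroup N]
  [Module K N]

def compl₁₂₃₄ (T : M →ₗ[K] M →ₗ[K] M →ₗ[K] M →ₗ[K] K) (f g h k : N →ₗ[K] M) :
    N →ₗ[K] N →ₗ[K] N →ₗ[K] N →ₗ[K] K :=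
  llcomp K N _ _ (llcomp K N _ _ (lcomp K K k)) ∘ₗ
    (llcomp K N _ _ (lcomp K (M →ₗ[K] K) h) ∘ₗ (lcomp K (M →ₗ[K] M →ₗ[K] K) g ∘ₗ T ∘ₗ f))

@[simp]
theorem compl₁₂₃₄_apply (T : M →ₗ[K] M →ₗ[K] M →ₗ[K] M →ₗ[K] K) (f g h k : N →ₗ[K] M)
    (a b c d : N) : compl₁₂₃₄ T f g h k a b c d = T (f a) (g b) (h c) (k d) := rfl

/-- `map_neg` does not apply: instance search fails to find the `AddCommGroup` structure on
trilinear forms. -/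
theorem map_neg_apply₄ (T : M →ₗ[K] M →ₗ[K] M →ₗ[K] M →ₗ[K] K) (x y z w : M) :
    T (-x) y z w = -T x y z w := by
  rw [← neg_one_smul K x, map_smul]
  simp

end LinearMap

theorem jacobi_comp_comm_of_selfAdjoint {K U : Type*} [CommRing K] [AddCommGroup U] [Module K U]
    (g : U →ₗ[K] U →ₗ[K] K) (hg : ∀ u, (∀ v, g u v = 0) → u = 0)
    (S : U →ₗ[K] U →ₗ[K] U →ₗ[K] U →ₗ[K] K) (T : U →ₗ[K] U)
    (hgT : ∀ u v, g (T u) v = g u (T v)) (hST : ∀ a b c d, S (T a) b c d = S a b c (T d))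
    (Jac : U → U →ₗ[K] U) (hJac : ∀ x y z, g (Jac x y) z = S y x x z) (x : U) :
    Jac x ∘ₗ T = T ∘ₗ Jac x := by
  ext y
  refine sub_eq_zero.mp (hg _ fun z => ?_)
  rw [LinearMap.comp_apply, LinearMap.comp_apply, map_sub, LinearMap.sub_apply, hgT, hJac, hJac,
    hST, sub_self]

namespace SplitModel

variable {V : Type*} [AddCommGroup V] [Module ℝ V]

def rot : (V × V) →ₗ[ℝ] (V × V) := (LinearMap.snd ℝ V V).prod (-LinearMap.fst ℝ V V)

@[simp]
theorem rot_apply (u : V × V) : rot u = (u.2, -u.1) := rfl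

theorem rot_comp_rot : (rot ∘ₗ rot : (V × V) →ₗ[ℝ] V × V) = -LinearMap.id := by
  ext <;> simp

section form

variable (B : V →ₗ[ℝ] V →ₗ[ℝ] ℝ)

def form : (V × V) →ₗ[ℝ] (V × V) →ₗ[ℝ] ℝ :=
  B.compl₁₂ (LinearMap.fst ℝ V V) (LinearMap.fst ℝ V V) -
    B.compl₁₂ (LinearMap.snd ℝ V V) (LinearMap.snd ℝ V V)

@[simp]
theorem form_apply (u v : V × V) : form B u v = B u.1 v.1 - B u.2 v.2 := rfl

variable {B}

theorem form_symm (hB : ∀ x y, B x y = B y x) (u v : V × V) : form B u v = form B v u := by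
  simp [hB u.1, hB u.2]

theorem form_nondegenerate (hB : ∀ x, x ≠ 0 → 0 < B x x) (u : V × V)
    (hu : ∀ v, form B u v = 0) : u = 0 := by
  have anisotropic : ∀ x, B x x = 0 → x = 0 := fun x hx => by
    by_contra h
    exact (hB x h).ne' hx
  refine Prod.ext (anisotropic _ ?_) (anisotropic _ ?_)
  · simpa using hu (u.1, 0)
  · simpa using hu (0, u.2)

theorem form_basis_prod {ι : Type*} [DecidableEq ι] (e : Module.Basis ι ℝ V)
    (he : ∀ i j, B (e i) (e j) = if i = j then 1 else 0) (u v : ι ⊕ ι) :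
    form B (e.prod e u) (e.prod e v) =
      if u = v then Sum.elim (fun _ => 1) (fun _ => -1) u else 0 := by
  rcases u with i | i <;> rcases v with j | j <;> by_cases hij : i = j <;> simp [he, hij]

theorem form_rot_apply (u v : V × V) : form B (rot u) v = B u.2 v.1 + B u.1 v.2 := by
  simp

theorem form_rot_left (u v : V × V) : form B (rot u) v = form B u (rot v) := by
  simp only [form_apply, rot_apply, map_neg, LinearMap.neg_apply, sub_neg_eq_add]
  ring

end form

section curv

variable (R : V →ₗ[ℝ] V →ₗ[ℝ] V →ₗ[ℝ] V →ₗ[ℝ] ℝ)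

/-- The terms with three `snd`s carry their sign in the first slot, since subtraction of
4-linear forms is not found by instance search either. -/
def curv : (V × V) →ₗ[ℝ] (V × V) →ₗ[ℝ] (V × V) →ₗ[ℝ] (V × V) →ₗ[ℝ] ℝ :=
  letI p := LinearMap.fst ℝ V V
  letI q := LinearMap.snd ℝ V V
  R.compl₁₂₃₄ q p p p + R.compl₁₂₃₄ p q p p + R.compl₁₂₃₄ p p q p + R.compl₁₂₃₄ p p p q +
    (R.compl₁₂₃₄ (-p) q q q + R.compl₁₂₃₄ (-q) p q q + R.compl₁₂₃₄ (-q) q p q +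
      R.compl₁₂₃₄ (-q) q q p)

theorem curv_apply (a b c d : V × V) : curv R a b c d =
    (R a.2 b.1 c.1 d.1 + R a.1 b.2 c.1 d.1 + R a.1 b.1 c.2 d.1 + R a.1 b.1 c.1 d.2) -
      (R a.1 b.2 c.2 d.2 + R a.2 b.1 c.2 d.2 + R a.2 b.2 c.1 d.2 + R a.2 b.2 c.2 d.1) := by
  simp only [curv, LinearMap.add_apply, LinearMap.compl₁₂₃₄_apply, LinearMap.neg_apply,
    LinearMap.map_neg_apply₄, LinearMap.fst_apply, LinearMap.snd_apply]
  ring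

theorem curv_rot_left (a b c d : V × V) : curv R (rot a) b c d = curv R a b c (rot d) := by
  simp only [curv_apply, rot_apply, LinearMap.map_neg_apply₄, map_neg]
  ring

variable {R}

theorem curv_antisymm (hR : ∀ x y z w, R x y z w = -R y x z w) (a b c d : V × V) :
    curv R a b c d = -curv R b a c d := by
  simp only [curv_apply]
  linear_combination hR a.2 b.1 c.1 d.1 + hR a.1 b.2 c.1 d.1 + hR a.1 b.1 c.2 d.1
    + hR a.1 b.1 c.1 d.2 - hR a.1 b.2 c.2 d.2 - hR a.2 b.1 c.2 d.2 - hR a.2 b.2 c.1 d.2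
    - hR a.2 b.2 c.2 d.1

theorem curv_pair_symm (hR : ∀ x y z w, R x y z w = R z w x y) (a b c d : V × V) :
    curv R a b c d = curv R c d a b := by
  simp only [curv_apply]
  linear_combination hR a.2 b.1 c.1 d.1 + hR a.1 b.2 c.1 d.1 + hR a.1 b.1 c.2 d.1
    + hR a.1 b.1 c.1 d.2 - hR a.1 b.2 c.2 d.2 - hR a.2 b.1 c.2 d.2 - hR a.2 b.2 c.1 d.2
    - hR a.2 b.2 c.2 d.1

theorem curv_bianchi (hR : ∀ x y z w, R x y z w + R y z x w + R z x y w = 0)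
    (a b c d : V × V) : curv R a b c d + curv R b c a d + curv R c a b d = 0 := by
  simp only [curv_apply]
  linear_combination hR a.2 b.1 c.1 d.1 + hR a.1 b.2 c.1 d.1 + hR a.1 b.1 c.2 d.1
    + hR a.1 b.1 c.1 d.2 - hR a.1 b.2 c.2 d.2 - hR a.2 b.1 c.2 d.2 - hR a.2 b.2 c.1 d.2
    - hR a.2 b.2 c.2 d.1

theorem curv_ricci {ι : Type*} [Fintype ι] (B : V →ₗ[ℝ] V →ₗ[ℝ] ℝ) (e : ι → V) (s : ℝ)
    (hR : ∀ x y, ∑ i, R x (e i) (e i) y = s * B x y) (u v : V × V) :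
    form B (((2 * s) • rot) u) v =
      ∑ i, curv R u (e i, 0) (e i, 0) v - ∑ i, curv R u (0, e i) (0, e i) v := by
  simp only [curv_apply, map_zero, LinearMap.zero_apply, map_smul, LinearMap.smul_apply,
    form_rot_apply]
  simp [Finset.sum_add_distrib, hR]
  ring

end curv

end SplitModel

open SplitModel in
theorem stmt12_general {V : Type*} [AddCommGroup V] [Module ℝ V]
    {m : ℕ}
    (B : V →ₗ[ℝ] V →ₗ[ℝ] ℝ)
    (hBsymm : ∀ x y, B x y = B y x)
    (hBpos : ∀ x, x ≠ 0 → 0 < B x x)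
    (R : V →ₗ[ℝ] V →ₗ[ℝ] V →ₗ[ℝ] V →ₗ[ℝ] ℝ)
    (hR1 : ∀ x y z w, R x y z w = -R y x z w)
    (hR2 : ∀ x y z w, R x y z w = R z w x y)
    (hR3 : ∀ x y z w, R x y z w + R y z x w + R z x y w = 0)
    (e : Module.Basis (Fin m) ℝ V)
    (he : ∀ i j, B (e i) (e j) = if i = j then (1 : ℝ) else 0)
    (s : ℝ)
    (hEin : ∀ x y, (∑ i, R x (e i) (e i) y) = s * B x y) :
    ∃ (B' : (V × V) →ₗ[ℝ] (V × V) →ₗ[ℝ] ℝ)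
      (S : (V × V) →ₗ[ℝ] (V × V) →ₗ[ℝ] (V × V) →ₗ[ℝ] (V × V) →ₗ[ℝ] ℝ)
      (ρN : (V × V) →ₗ[ℝ] (V × V)),
      -- the inner product ⟨·,·⟩' on U = V ⊕ V
      (∀ u v : V × V, B' u v = B u.1 v.1 - B u.2 v.2) ∧
      (∀ u v : V × V, B' u v = B' v u) ∧
      (∀ u : V × V, (∀ v, B' u v = 0) → u = 0) ∧
      -- ⟨·,·⟩' has signature (m,m): {x⁺} ∪ {x⁻} built from e is an orthonormal basis
      (∀ u v : Fin m ⊕ Fin m,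
        B' ((e.prod e) u) ((e.prod e) v) =
          if u = v then (Sum.elim (fun _ => (1 : ℝ)) (fun _ => (-1 : ℝ)) u) else 0) ∧
      -- the tensor S (multilinear extension of: 0 for an even number of minus slots,
      -- R for exactly one minus slot, −R for exactly three minus slots)
      (∀ u₁ u₂ u₃ u₄ : V × V, S u₁ u₂ u₃ u₄ =
          (R u₁.2 u₂.1 u₃.1 u₄.1 + R u₁.1 u₂.2 u₃.1 u₄.1
            + R u₁.1 u₂.1 u₃.2 u₄.1 + R u₁.1 u₂.1 u₃.1 u₄.2)
        - (R u₁.1 u₂.2 u₃.2 u₄.2 + R u₁.2 u₂.1 u₃.2 u₄.2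
            + R u₁.2 u₂.2 u₃.1 u₄.2 + R u₁.2 u₂.2 u₃.2 u₄.1)) ∧
      -- S is an algebraic curvature tensor
      (∀ a b c d : V × V, S a b c d = -S b a c d) ∧
      (∀ a b c d : V × V, S a b c d = S c d a b) ∧
      (∀ a b c d : V × V, S a b c d + S b c a d + S c a b d = 0) ∧
      -- ρN is the Ricci operator of 𝔑 (w.r.t. the orthonormal basis above)
      (∀ u v : V × V, B' (ρN u) v =
        (∑ i, S u (e i, 0) (e i, 0) v) - ∑ i, S u (0, e i) (0, e i) v) ∧
      -- 𝔑 is Jacobi–Videv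
      (∀ JS : (V × V) → (V × V) →ₗ[ℝ] (V × V),
        (∀ x y z, B' (JS x y) z = S y x x z) → ∀ x, (JS x) ∘ₗ ρN = ρN ∘ₗ (JS x)) ∧
      -- ρ_𝔑² = −4s²·id
      (ρN ∘ₗ ρN = (-(4 * s ^ 2)) • LinearMap.id) := by
  refine ⟨form B, curv R, (2 * s) • rot, form_apply B, form_symm hBsymm, form_nondegenerate hBpos,
    form_basis_prod e he, curv_apply R, curv_antisymm hR1, curv_pair_symm hR2, curv_bianchi hR3,
    curv_ricci B e s hEin, ?_, ?_⟩
  · intro JS hJS x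
    refine jacobi_comp_comm_of_selfAdjoint _ (form_nondegenerate hBpos) _ _ (fun u v => ?_)
      (fun a b c d => ?_) JS hJS x
    · simp only [LinearMap.smul_apply, map_smul, form_rot_left]
    · simp only [LinearMap.smul_apply, map_smul, curv_rot_left]
  · rw [LinearMap.smul_comp, LinearMap.comp_smul, rot_comp_rot, smul_smul, smul_neg, ← neg_smul]
    congr 2
    ring

/-- From a Riemannian Einstein model (V, ⟨·,·⟩, R) with Ricci operator
s·id, the "imaginary part of the complexification" construction on U := V ⊕ V yields a
model 𝔑 = (U, ⟨·,·⟩', S) of neutral signature (m,m) which is Jacobi–Videv and whose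
Ricci operator satisfies ρ_𝔑² = −4s²·id.  An element (x, y) of V × V represents
x⁺ + y⁻. -/
theorem stmt12 {V : Type*} [AddCommGroup V] [Module ℝ V] [FiniteDimensional ℝ V]
    {m : ℕ}
    (B : V →ₗ[ℝ] V →ₗ[ℝ] ℝ)
    (hBsymm : ∀ x y, B x y = B y x)
    (hBpos : ∀ x, x ≠ 0 → 0 < B x x)
    (R : V →ₗ[ℝ] V →ₗ[ℝ] V →ₗ[ℝ] V →ₗ[ℝ] ℝ)
    (hR1 : ∀ x y z w, R x y z w = -R y x z w)
    (hR2 : ∀ x y z w, R x y z w = R z w x y)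
    (hR3 : ∀ x y z w, R x y z w + R y z x w + R z x y w = 0)
    (e : Module.Basis (Fin m) ℝ V)
    (he : ∀ i j, B (e i) (e j) = if i = j then (1 : ℝ) else 0)
    (s : ℝ)
    (hEin : ∀ x y, (∑ i, R x (e i) (e i) y) = s * B x y) :
    ∃ (B' : (V × V) →ₗ[ℝ] (V × V) →ₗ[ℝ] ℝ)
      (S : (V × V) →ₗ[ℝ] (V × V) →ₗ[ℝ] (V × V) →ₗ[ℝ] (V × V) →ₗ[ℝ] ℝ)
      (ρN : (V × V) →ₗ[ℝ] (V × V)),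
      -- the inner product ⟨·,·⟩' on U = V ⊕ V
      (∀ u v : V × V, B' u v = B u.1 v.1 - B u.2 v.2) ∧
      (∀ u v : V × V, B' u v = B' v u) ∧
      (∀ u : V × V, (∀ v, B' u v = 0) → u = 0) ∧
      -- ⟨·,·⟩' has signature (m,m): {x⁺} ∪ {x⁻} built from e is an orthonormal basis
      (∀ u v : Fin m ⊕ Fin m,
        B' ((e.prod e) u) ((e.prod e) v) =
          if u = v then (Sum.elim (fun _ => (1 : ℝ)) (fun _ => (-1 : ℝ)) u) else 0) ∧
      -- the tensor S (multilinear extension of: 0 for an even number of minus slots,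
      -- R for exactly one minus slot, −R for exactly three minus slots)
      (∀ u₁ u₂ u₃ u₄ : V × V, S u₁ u₂ u₃ u₄ =
          (R u₁.2 u₂.1 u₃.1 u₄.1 + R u₁.1 u₂.2 u₃.1 u₄.1
            + R u₁.1 u₂.1 u₃.2 u₄.1 + R u₁.1 u₂.1 u₃.1 u₄.2)
        - (R u₁.1 u₂.2 u₃.2 u₄.2 + R u₁.2 u₂.1 u₃.2 u₄.2
            + R u₁.2 u₂.2 u₃.1 u₄.2 + R u₁.2 u₂.2 u₃.2 u₄.1)) ∧
      -- S is an algebraic curvature tensor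
      (∀ a b c d : V × V, S a b c d = -S b a c d) ∧
      (∀ a b c d : V × V, S a b c d = S c d a b) ∧
      (∀ a b c d : V × V, S a b c d + S b c a d + S c a b d = 0) ∧
      -- ρN is the Ricci operator of 𝔑 (w.r.t. the orthonormal basis above)
      (∀ u v : V × V, B' (ρN u) v =
        (∑ i, S u (e i, 0) (e i, 0) v) - ∑ i, S u (0, e i) (0, e i) v) ∧
      -- 𝔑 is Jacobi–Videv
      (∀ JS : (V × V) → (V × V) →ₗ[ℝ] (V × V),
        (∀ x y z, B' (JS x y) z = S y x x z) → ∀ x, (JS x) ∘ₗ ρN = ρN ∘ₗ (JS x)) ∧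
      -- ρ_𝔑² = −4s²·id
      (ρN ∘ₗ ρN = (-(4 * s ^ 2)) • LinearMap.id) :=
  stmt12_general B hBsymm hBpos R hR1 hR2 hR3 e he s hEin
end

section
/- Let 𝔐 = (V, ⟨·,·⟩, R) be a model. The following are equivalent: (1) 𝔐 is Jacobi–Videv, i.e. J(x)∘ρ = ρ∘J(x) for all x ∈ V; (2) J(π)∘J(π^⊥) = J(π^⊥)∘J(π) for every nondegenerate subspace π ⊆ V (where π^⊥ denotes the ⟨·,·⟩-orthogonal complement, which is then also nondegenerate); (3) J(π)∘ρ = ρ∘J(π) for every nondegenerate subspace π ⊆ V. -/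
/-!
For every orthonormal basis `uᵢ` of `V` one has `∑ εᵢ J(uᵢ) = ρ`, because the Ricci contraction
is a trace and does not depend on the basis. If `vᵢ` and `wⱼ` are orthonormal bases of `π` and
`π^⊥`, they form together an orthonormal basis of `V`, so `J(π) + J(π^⊥) = ρ` and `J(π)` commutes
with `J(π^⊥)` iff it commutes with `ρ`: this is (2) ⇔ (3). (1) ⇒ (3) since `J(π)` is a linear
combination of Jacobi operators. For (3) ⇒ (1), the line spanned by a non-null vector `z` gives
that `J(z)` commutes with `ρ`; as `z ↦ [J(z), ρ]` is quadratic, it then vanishes identically,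
because a quadratic form vanishing on all non-null vectors is zero (test it on `eᵢ` and
`eᵢ + 2eⱼ` for an orthonormal basis `eᵢ`).
-/

open Submodule

section

variable {V : Type*} [AddCommGroup V] [Module ℝ V]

structure IsSignedOrthonormal {ι : Type*} [DecidableEq ι] (B : V →ₗ[ℝ] V →ₗ[ℝ] ℝ)
    (u : ι → V) (η : ι → ℝ) : Prop where
  sign_eq : ∀ i, η i = 1 ∨ η i = -1
  apply_eq : ∀ i j, B (u i) (u j) = if i = j then η i else 0

namespace IsSignedOrthonormal

variable {ι κ : Type*} [DecidableEq ι] [DecidableEq κ] {B : V →ₗ[ℝ] V →ₗ[ℝ] ℝ}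
  {u : ι → V} {η : ι → ℝ}

lemma mul_self (h : IsSignedOrthonormal B u η) (i : ι) : η i * η i = 1 := by
  rcases h.sign_eq i with hi | hi <;> simp [hi]

lemma ne_zero (h : IsSignedOrthonormal B u η) (i : ι) : η i ≠ 0 := by
  rcases h.sign_eq i with hi | hi <;> simp [hi]

lemma apply_self (h : IsSignedOrthonormal B u η) (i : ι) : B (u i) (u i) = η i := by
  simp [h.apply_eq]

lemma of_unique [Unique ι] {v : V} (hv : B v v = 1 ∨ B v v = -1) :
    IsSignedOrthonormal B (fun _ : ι => v) (fun _ => B v v) :=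
  ⟨fun _ => hv, fun i j => by simp [Subsingleton.elim i j]⟩

lemma sum_elim {w : κ → V} {θ : κ → ℝ} (hu : IsSignedOrthonormal B u η)
    (hw : IsSignedOrthonormal B w θ) (huw : ∀ i j, B (u i) (w j) = 0)
    (hwu : ∀ i j, B (w j) (u i) = 0) :
    IsSignedOrthonormal B (Sum.elim u w) (Sum.elim η θ) where
  sign_eq := by rintro (i | i) <;> simp [hu.sign_eq, hw.sign_eq]
  apply_eq := by rintro (i | i) (j | j) <;> simp [hu.apply_eq, hw.apply_eq, huw, hwu]

variable [Fintype ι]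

lemma apply_sum_smul (h : IsSignedOrthonormal B u η) (c : ι → ℝ) (j : ι) :
    B (∑ i, c i • u i) (u j) = c j * η j := by
  simp [LinearMap.sum_apply, h.apply_eq]

lemma sum_smul_eq (h : IsSignedOrthonormal B u η) {x : V} (hx : x ∈ span ℝ (Set.range u)) :
    ∑ i, (η i * B x (u i)) • u i = x := by
  obtain ⟨c, rfl⟩ := (mem_span_range_iff_exists_fun ℝ).1 hx
  refine Finset.sum_congr rfl fun i _ => ?_
  rw [h.apply_sum_smul, mul_left_comm, h.mul_self, mul_one]

lemma apply_sub_sum_smul_eq_zero (h : IsSignedOrthonormal B u η) (x : V) {y : V}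
    (hy : y ∈ span ℝ (Set.range u)) : B (x - ∑ i, (η i * B x (u i)) • u i) y = 0 := by
  have hle : span ℝ (Set.range u) ≤ LinearMap.ker (B (x - ∑ i, (η i * B x (u i)) • u i)) := by
    refine span_le.2 ?_
    rintro _ ⟨j, rfl⟩
    simp only [SetLike.mem_coe, LinearMap.mem_ker, map_sub, LinearMap.sub_apply,
      h.apply_sum_smul]
    linear_combination -B x (u j) * h.mul_self j
  exact hle hy

end IsSignedOrthonormal

section SignedOrthonormalBases

variable {ι : Type*} [DecidableEq ι] [Fintype ι] {B : V →ₗ[ℝ] V →ₗ[ℝ] ℝ}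

lemma span_sum_elim_eq_top {κ : Type*} {v : ι → V} {η : ι → ℝ} (hv : IsSignedOrthonormal B v η)
    {π : Submodule ℝ V} (hvπ : span ℝ (Set.range v) = π) {w : κ → V}
    (hw : ∀ x, (∀ y ∈ π, B x y = 0) → x ∈ span ℝ (Set.range w)) :
    span ℝ (Set.range (Sum.elim v w)) = ⊤ := by
  refine eq_top_iff'.2 fun x => ?_
  rw [Set.Sum.elim_range, span_union]
  have hproj : ∑ i, (η i * B x (v i)) • v i ∈ span ℝ (Set.range v) :=
    sum_mem fun i _ => smul_mem _ _ (subset_span ⟨i, rfl⟩)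
  have hrest : x - ∑ i, (η i * B x (v i)) • v i ∈ span ℝ (Set.range w) :=
    hw _ fun y hy => hv.apply_sub_sum_smul_eq_zero x (hvπ ▸ hy)
  exact mem_sup.2 ⟨_, hproj, _, hrest, add_sub_cancel _ _⟩

lemma IsSignedOrthonormal.sum_mul_apply_self_eq {κ : Type*} [DecidableEq κ] [Fintype κ]
    (hBsymm : ∀ x y, B x y = B y x)
    {u : ι → V} {η : ι → ℝ} (hu : IsSignedOrthonormal B u η) (hus : span ℝ (Set.range u) = ⊤)
    {e : κ → V} {ε : κ → ℝ} (he : IsSignedOrthonormal B e ε) (hes : span ℝ (Set.range e) = ⊤)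
    (T : V →ₗ[ℝ] V →ₗ[ℝ] ℝ) :
    ∑ i, η i * T (u i) (u i) = ∑ a, ε a * T (e a) (e a) := by
  have hexp_u : ∀ i, u i = ∑ a, (ε a * B (u i) (e a)) • e a :=
    fun i => (he.sum_smul_eq (hes ▸ mem_top)).symm
  have hexp_e : ∀ a, e a = ∑ i, (η i * B (e a) (u i)) • u i :=
    fun a => (hu.sum_smul_eq (hus ▸ mem_top)).symm
  calc ∑ i, η i * T (u i) (u i)
      = ∑ i, ∑ a, ε a * ((η i * B (e a) (u i)) * T (u i) (e a)) := by
        refine Finset.sum_congr rfl fun i _ => ?_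
        rw [congrArg (T (u i)) (hexp_u i)]
        simp only [map_sum, map_smul, smul_eq_mul, Finset.mul_sum, hBsymm (u i)]
        exact Finset.sum_congr rfl fun a _ => by ring
    _ = ∑ a, ε a * T (e a) (e a) := by
        rw [Finset.sum_comm]
        refine Finset.sum_congr rfl fun a _ => ?_
        rw [congrArg (fun x => T x (e a)) (hexp_e a)]
        simp only [map_sum, map_smul, LinearMap.sum_apply, LinearMap.smul_apply, smul_eq_mul,
          Finset.mul_sum]

lemma exists_smul_apply_self_eq_one_or {z : V} (hz : B z z ≠ 0) :
    ∃ c : ℝ, c ≠ 0 ∧ (B (c • z) (c • z) = 1 ∨ B (c • z) (c • z) = -1) := by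
  set s := √|B z z|
  have hss : s * s = |B z z| := Real.mul_self_sqrt (abs_nonneg _)
  refine ⟨s⁻¹, inv_ne_zero (Real.sqrt_pos.2 (abs_pos.2 hz)).ne', ?_⟩
  have hval : B (s⁻¹ • z) (s⁻¹ • z) = B z z / |B z z| := by
    simp only [map_smul, LinearMap.smul_apply, smul_eq_mul]
    rw [← hss, div_mul_eq_div_div]
    ring
  rw [hval]
  rcases abs_choice (B z z) with h | h <;> rw [h]
  · exact Or.inl (div_self hz)
  · exact Or.inr (by rw [div_neg, div_self hz])

variable [FiniteDimensional ℝ V]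

lemma exists_isSignedOrthonormal_span_eq_top (hBsymm : ∀ x y, B x y = B y x)
    (hBnd : ∀ x, (∀ y, B x y = 0) → x = 0) :
    ∃ (l : ℕ) (w : Fin l → V) (θ : Fin l → ℝ),
      IsSignedOrthonormal B w θ ∧ span ℝ (Set.range w) = ⊤ := by
  obtain ⟨b, hb⟩ := LinearMap.BilinForm.exists_orthogonal_basis (B := B)
    (LinearMap.isSymm_def.2 hBsymm)
  have hnull : ∀ i, B (b i) (b i) ≠ 0 := by
    intro i hi
    refine b.ne_zero i (hBnd _ fun y => ?_)
    have hBi : B (b i) = 0 := b.ext fun j => by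
      rcases eq_or_ne i j with rfl | hij
      · exact hi
      · exact hb hij
    rw [hBi, LinearMap.zero_apply]
  choose c hc0 hc using fun i => exists_smul_apply_self_eq_one_or (hnull i)
  refine ⟨_, fun i => c i • b i, fun i => B (c i • b i) (c i • b i), ⟨hc, fun i j => ?_⟩,
    ?_⟩
  · split_ifs with hij
    · rw [hij]
    · simp only [map_smul, LinearMap.smul_apply, smul_eq_mul,
        show B (b i) (b j) = 0 from hb hij, mul_zero]
  · have hspan := (b.isUnitSMul fun i => (hc0 i).isUnit).span_eq
    rwa [show ⇑(b.isUnitSMul fun i => (hc0 i).isUnit) = fun i => c i • b i from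
      funext (Module.Basis.isUnitSMul_apply _)] at hspan

lemma exists_isSignedOrthonormal_orthogonal (hBsymm : ∀ x y, B x y = B y x)
    (hBnd : ∀ x, (∀ y, B x y = 0) → x = 0) {v : ι → V} {η : ι → ℝ}
    (hv : IsSignedOrthonormal B v η) {π : Submodule ℝ V} (hvπ : span ℝ (Set.range v) = π) :
    ∃ (l : ℕ) (w : Fin l → V) (θ : Fin l → ℝ), IsSignedOrthonormal B w θ ∧
      (∀ i, ∀ y ∈ π, B (w i) y = 0) ∧
      ∀ x, (∀ y ∈ π, B x y = 0) → x ∈ span ℝ (Set.range w) := by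
  set U := LinearMap.BilinForm.orthogonal B π
  have hmemU : ∀ x, x ∈ U ↔ ∀ y ∈ π, B x y = 0 := fun x => by
    simp only [U, LinearMap.BilinForm.mem_orthogonal_iff, hBsymm _ x]
  have hproj : ∀ t, ∑ i, (η i * B t (v i)) • v i ∈ π := fun t =>
    hvπ ▸ sum_mem fun i _ => smul_mem _ _ (subset_span ⟨i, rfl⟩)
  have hrest : ∀ t, t - ∑ i, (η i * B t (v i)) • v i ∈ U := fun t =>
    (hmemU _).2 fun y hy => hv.apply_sub_sum_smul_eq_zero t (hvπ ▸ hy)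
  have hUnd : ∀ x : U, (∀ y : U, B x y = 0) → x = 0 := by
    refine fun x hx => Subtype.ext (hBnd x fun t => ?_)
    calc B x t = B x (t - ∑ i, (η i * B t (v i)) • v i) + B x (∑ i, (η i * B t (v i)) • v i) := by
          rw [← map_add, sub_add_cancel]
      _ = 0 := by rw [hx ⟨_, hrest t⟩, (hmemU x).1 x.2 _ (hproj t), add_zero]
  obtain ⟨l, w, θ, hw, hwspan⟩ :=
    exists_isSignedOrthonormal_span_eq_top (B := LinearMap.BilinForm.restrict B U)
      (fun x y => hBsymm x y) hUnd
  have hspanU : span ℝ (Set.range fun i => (w i : V)) = U := by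
    rw [show (Set.range fun i => (w i : V)) = U.subtype '' Set.range w from Set.range_comp _ _,
      span_image, hwspan, map_subtype_top]
  exact ⟨l, fun i => w i, θ, ⟨hw.sign_eq, hw.apply_eq⟩, fun i => (hmemU _).1 (w i).2,
    fun x hx => by rw [hspanU]; exact (hmemU x).2 hx⟩

end SignedOrthonormalBases

section Curvature

variable {B : V →ₗ[ℝ] V →ₗ[ℝ] ℝ} {R : V →ₗ[ℝ] V →ₗ[ℝ] V →ₗ[ℝ] V →ₗ[ℝ] ℝ}
  {J : V → V →ₗ[ℝ] V} {ρ : V →ₗ[ℝ] V}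

lemma linearMap_eq_of_nondegenerate (hBnd : ∀ x, (∀ y, B x y = 0) → x = 0)
    {A A' : V →ₗ[ℝ] V} (h : ∀ x y, B (A x) y = B (A' x) y) : A = A' :=
  LinearMap.ext fun x => sub_eq_zero.1 (hBnd _ fun y => by simp [h])

lemma jacobi_smul (hBnd : ∀ x, (∀ y, B x y = 0) → x = 0)
    (hJ : ∀ x y z, B (J x y) z = R y x x z) (c : ℝ) (z : V) : J (c • z) = (c * c) • J z :=
  linearMap_eq_of_nondegenerate hBnd fun x y => by
    simp only [hJ, LinearMap.smul_apply, map_smul, smul_eq_mul]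
    ring

lemma curvature_apply_comm (hR1 : ∀ x y z w, R x y z w = -R y x z w)
    (hR2 : ∀ x y z w, R x y z w = R z w x y) (x z y : V) : R x z z y = R y z z x := by
  rw [hR2 x z z y, hR1 z y, hR2 y z x z, hR1 x z, hR2 z x y z, neg_neg]

lemma ricci_isSelfAdjoint {ι : Type*} [Fintype ι] {e : ι → V} {ε : ι → ℝ}
    (hBsymm : ∀ x y, B x y = B y x) (hR1 : ∀ x y z w, R x y z w = -R y x z w)
    (hR2 : ∀ x y z w, R x y z w = R z w x y)
    (hρ : ∀ x y, B (ρ x) y = ∑ i, ε i * R x (e i) (e i) y) : B.IsSelfAdjoint ρ := fun a b => by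
  rw [hρ, hBsymm a, hρ]
  exact Finset.sum_congr rfl fun i _ => by rw [curvature_apply_comm hR1 hR2]

lemma sum_smul_jacobi_eq_ricci {ι κ : Type*} [DecidableEq ι] [Fintype ι] [DecidableEq κ]
    [Fintype κ] {e : ι → V} {ε : ι → ℝ} (hBsymm : ∀ x y, B x y = B y x)
    (hBnd : ∀ x, (∀ y, B x y = 0) → x = 0) (hJ : ∀ x y z, B (J x y) z = R y x x z)
    (he : IsSignedOrthonormal B e ε) (hes : span ℝ (Set.range e) = ⊤)
    (hρ : ∀ x y, B (ρ x) y = ∑ i, ε i * R x (e i) (e i) y)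
    {u : κ → V} {η : κ → ℝ} (hu : IsSignedOrthonormal B u η) (hus : span ℝ (Set.range u) = ⊤) :
    ∑ i, η i • J (u i) = ρ :=
  linearMap_eq_of_nondegenerate hBnd fun x y => by
    simp only [LinearMap.sum_apply, LinearMap.smul_apply, map_sum, map_smul, smul_eq_mul, hJ, hρ]
    exact hu.sum_mul_apply_self_eq hBsymm hus he hes ((R x).compr₂ (LinearMap.applyₗ y))

lemma apply_self_eq_zero_of_forall_nonnull {ι : Type*} [DecidableEq ι] (e : Module.Basis ι ℝ V)
    {ε : ι → ℝ} (he : IsSignedOrthonormal B e ε) (T : V →ₗ[ℝ] V →ₗ[ℝ] ℝ)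
    (hT : ∀ z, B z z ≠ 0 → T z z = 0) (x : V) : T x x = 0 := by
  set S := T + T.flip
  have hS : ∀ z, B z z ≠ 0 → S z z = 0 := fun z hz => by simp [S, hT z hz]
  have hSe : ∀ i, S (e i) (e i) = 0 := fun i => hS _ (by rw [he.apply_self]; exact he.ne_zero i)
  have hS0 : S = 0 := by
    refine LinearMap.ext_basis e e fun i j => ?_
    rcases eq_or_ne i j with rfl | hij
    · exact hSe i
    have hnull : B (e i + (2 : ℝ) • e j) (e i + (2 : ℝ) • e j) ≠ 0 := by
      simp only [map_add, map_smul, LinearMap.add_apply, LinearMap.smul_apply, smul_eq_mul,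
        he.apply_self, he.apply_eq, hij, hij.symm, if_false]
      rcases he.sign_eq i with hi | hi <;> rcases he.sign_eq j with hj | hj <;>
        rw [hi, hj] <;> norm_num
    have h := hS _ hnull
    simp only [map_add, map_smul, LinearMap.add_apply, LinearMap.smul_apply, smul_eq_mul,
      hSe] at h
    have hsymm : S (e j) (e i) = S (e i) (e j) := by simp [S, add_comm]
    simp only [LinearMap.zero_apply]
    linarith
  simpa [S, ← two_mul] using congrArg (fun F : V →ₗ[ℝ] V →ₗ[ℝ] ℝ => F x x) hS0

lemma commute_jacobi_of_forall_nonnull {ι : Type*} [DecidableEq ι]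
    (hBnd : ∀ x, (∀ y, B x y = 0) → x = 0) (hJ : ∀ x y z, B (J x y) z = R y x x z)
    (e : Module.Basis ι ℝ V) {ε : ι → ℝ} (he : IsSignedOrthonormal B e ε) {A : V →ₗ[ℝ] V}
    (hA : B.IsSelfAdjoint A) (h : ∀ z, B z z ≠ 0 → Commute (J z) A) (x : V) :
    Commute (J x) A := by
  refine linearMap_eq_of_nondegenerate hBnd fun a b => ?_
  -- `z ↦ B ([J z, A] a) b` is the diagonal of a bilinear form, by the symmetries of `R`
  set T := (R (A a)).compr₂ (LinearMap.applyₗ b) - (R a).compr₂ (LinearMap.applyₗ (A b))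
  have hT : ∀ z, T z z = B ((J z * A) a) b - B ((A * J z) a) b := fun z => by
    simp [T, Module.End.mul_apply, hA (J z a) b, hJ]
  have hx := apply_self_eq_zero_of_forall_nonnull e he T
    (fun z hz => by rw [hT, (h z hz).eq, sub_self]) x
  rwa [hT, sub_eq_zero] at hx

lemma commute_jacobi_of_forall_unit {ι : Type*} [DecidableEq ι]
    (hBnd : ∀ x, (∀ y, B x y = 0) → x = 0) (hJ : ∀ x y z, B (J x y) z = R y x x z)
    (e : Module.Basis ι ℝ V) {ε : ι → ℝ} (he : IsSignedOrthonormal B e ε) {A : V →ₗ[ℝ] V}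
    (hA : B.IsSelfAdjoint A)
    (h : ∀ v, (B v v = 1 ∨ B v v = -1) → Commute (J v) A) (x : V) : Commute (J x) A := by
  refine commute_jacobi_of_forall_nonnull hBnd hJ e he hA (fun z hz => ?_) x
  obtain ⟨c, hc, hcz⟩ := exists_smul_apply_self_eq_one_or hz
  have hcomm := h _ hcz
  rwa [jacobi_smul hBnd hJ, Commute.smul_left_iff₀ (mul_ne_zero hc hc)] at hcomm

lemma commute_jacobi_orthogonal_iff {ι κ ν : Type*} [DecidableEq ι] [Fintype ι] [DecidableEq κ]
    [Fintype κ] [DecidableEq ν] [Fintype ν] {e : ι → V} {ε : ι → ℝ}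
    (hBsymm : ∀ x y, B x y = B y x) (hBnd : ∀ x, (∀ y, B x y = 0) → x = 0)
    (hJ : ∀ x y z, B (J x y) z = R y x x z) (he : IsSignedOrthonormal B e ε)
    (hes : span ℝ (Set.range e) = ⊤) (hρ : ∀ x y, B (ρ x) y = ∑ i, ε i * R x (e i) (e i) y)
    {π : Submodule ℝ V} {v : κ → V} {εv : κ → ℝ} (hv : IsSignedOrthonormal B v εv)
    (hvπ : span ℝ (Set.range v) = π) {w : ν → V} {εw : ν → ℝ} (hw : IsSignedOrthonormal B w εw)
    (hwπ : ∀ i, ∀ y ∈ π, B (w i) y = 0)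
    (hwspan : ∀ x, (∀ y ∈ π, B x y = 0) → x ∈ span ℝ (Set.range w)) :
    Commute (∑ i, εv i • J (v i)) (∑ i, εw i • J (w i)) ↔ Commute (∑ i, εv i • J (v i)) ρ := by
  have hvw : IsSignedOrthonormal B (Sum.elim v w) (Sum.elim εv εw) :=
    hv.sum_elim hw (fun i j => by rw [hBsymm]; exact hwπ j _ (hvπ ▸ subset_span ⟨i, rfl⟩))
      (fun i j => hwπ j _ (hvπ ▸ subset_span ⟨i, rfl⟩))
  have hsum : ∑ i, εv i • J (v i) + ∑ i, εw i • J (w i) = ρ := by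
    rw [← sum_smul_jacobi_eq_ricci hBsymm hBnd hJ he hes hρ hvw
      (span_sum_elim_eq_top hv hvπ hwspan), Fintype.sum_sum_type]
    rfl
  rw [← hsum]
  exact ⟨(Commute.refl _).add_right, fun h => by simpa using h.sub_right (Commute.refl _)⟩

end Curvature

end

theorem stmt14_general {V : Type*} [AddCommGroup V] [Module ℝ V] [FiniteDimensional ℝ V]
    {n : ℕ}
    (B : V →ₗ[ℝ] V →ₗ[ℝ] ℝ)
    (hBsymm : ∀ x y, B x y = B y x)
    (hBnd : ∀ x, (∀ y, B x y = 0) → x = 0)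
    (R : V →ₗ[ℝ] V →ₗ[ℝ] V →ₗ[ℝ] V →ₗ[ℝ] ℝ)
    (hR1 : ∀ x y z w, R x y z w = -R y x z w)
    (hR2 : ∀ x y z w, R x y z w = R z w x y)
    (e : Module.Basis (Fin n) ℝ V)
    (ε : Fin n → ℝ)
    (hε : ∀ i, ε i = 1 ∨ ε i = -1)
    (horth : ∀ i j, B (e i) (e j) = if i = j then ε i else 0)
    (J : V → V →ₗ[ℝ] V)
    (hJ : ∀ x y z, B (J x y) z = R y x x z)
    (ρ : V →ₗ[ℝ] V)
    (hρ : ∀ x y, B (ρ x) y = ∑ i, ε i * R x (e i) (e i) y) :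
    ((∀ x, (J x) ∘ₗ ρ = ρ ∘ₗ (J x)) ↔
      (∀ (π : Submodule ℝ V) (k l : ℕ) (v : Fin k → V) (εv : Fin k → ℝ)
          (w : Fin l → V) (εw : Fin l → ℝ),
        (∀ i, v i ∈ π) → (∀ i, εv i = 1 ∨ εv i = -1) →
        (∀ i j, B (v i) (v j) = if i = j then εv i else 0) →
        Submodule.span ℝ (Set.range v) = π →
        (∀ i, ∀ y ∈ π, B (w i) y = 0) → (∀ i, εw i = 1 ∨ εw i = -1) →
        (∀ i j, B (w i) (w j) = if i = j then εw i else 0) →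
        (∀ x : V, (∀ y ∈ π, B x y = 0) → x ∈ Submodule.span ℝ (Set.range w)) →
        (∑ i, εv i • J (v i)) ∘ₗ (∑ i, εw i • J (w i)) =
          (∑ i, εw i • J (w i)) ∘ₗ (∑ i, εv i • J (v i))))
    ∧
    ((∀ x, (J x) ∘ₗ ρ = ρ ∘ₗ (J x)) ↔
      (∀ (π : Submodule ℝ V) (k : ℕ) (v : Fin k → V) (εv : Fin k → ℝ),
        (∀ i, v i ∈ π) → (∀ i, εv i = 1 ∨ εv i = -1) →
        (∀ i j, B (v i) (v j) = if i = j then εv i else 0) →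
        Submodule.span ℝ (Set.range v) = π →
        (∑ i, εv i • J (v i)) ∘ₗ ρ = ρ ∘ₗ (∑ i, εv i • J (v i)))) := by
  have he : IsSignedOrthonormal B e ε := ⟨hε, horth⟩
  have hsum (h1 : ∀ x, Commute (J x) ρ) (k : ℕ) (v : Fin k → V) (εv : Fin k → ℝ) :
      Commute (∑ i, εv i • J (v i)) ρ :=
    Commute.sum_left _ _ _ fun i _ => (h1 (v i)).smul_left (εv i)
  have hunit (h : ∀ v, (B v v = 1 ∨ B v v = -1) → Commute (∑ _ : Fin 1, B v v • J v) ρ) :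
      ∀ x, Commute (J x) ρ :=
    commute_jacobi_of_forall_unit hBnd hJ e he (ricci_isSelfAdjoint hBsymm hR1 hR2 hρ)
      fun v hv => by
        have hv' := h v hv
        rwa [Fin.sum_univ_one, Commute.smul_left_iff₀ (by rcases hv with hs | hs <;> simp [hs])]
          at hv'
  refine ⟨⟨fun h1 π k l v εv w εw _ hεv hvo hvπ hwπ hεw hwo hwspan =>
      (commute_jacobi_orthogonal_iff hBsymm hBnd hJ he e.span_eq hρ ⟨hεv, hvo⟩ hvπ ⟨hεw, hwo⟩
        hwπ hwspan).2 (hsum h1 k v εv),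
    fun h2 => hunit fun v hv => ?_⟩,
    fun h1 π k v εv _ _ _ _ => hsum h1 k v εv, fun h3 => hunit fun v hv => ?_⟩
  · have hv1 := IsSignedOrthonormal.of_unique (ι := Fin 1) hv
    obtain ⟨l, w, εw, hw, hwπ, hwspan⟩ := exists_isSignedOrthonormal_orthogonal hBsymm hBnd hv1 rfl
    exact (commute_jacobi_orthogonal_iff hBsymm hBnd hJ he e.span_eq hρ hv1 rfl hw hwπ hwspan).1 <|
      h2 (span ℝ (Set.range fun _ : Fin 1 => v)) 1 l _ _ w εw (fun _ => subset_span ⟨0, rfl⟩)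
        hv1.sign_eq hv1.apply_eq rfl hwπ hw.sign_eq hw.apply_eq hwspan
  · have hv1 := IsSignedOrthonormal.of_unique (ι := Fin 1) hv
    exact h3 (span ℝ (Set.range fun _ : Fin 1 => v)) 1 _ _ (fun _ => subset_span ⟨0, rfl⟩)
      hv1.sign_eq hv1.apply_eq rfl

/-- A model is Jacobi–Videv iff the higher order Jacobi operators J(π) and
J(π^⊥) commute for every nondegenerate subspace π, iff J(π) commutes with the Ricci
operator ρ for every nondegenerate subspace π.  Here a nondegenerate subspace is
presented via a ⟨·,·⟩-orthonormal basis, and J(π) := Σᵢ εᵢ J(vᵢ). -/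
theorem stmt14 {V : Type*} [AddCommGroup V] [Module ℝ V] [FiniteDimensional ℝ V]
    {n : ℕ}
    (B : V →ₗ[ℝ] V →ₗ[ℝ] ℝ)
    (hBsymm : ∀ x y, B x y = B y x)
    (hBnd : ∀ x, (∀ y, B x y = 0) → x = 0)
    (R : V →ₗ[ℝ] V →ₗ[ℝ] V →ₗ[ℝ] V →ₗ[ℝ] ℝ)
    (hR1 : ∀ x y z w, R x y z w = -R y x z w)
    (hR2 : ∀ x y z w, R x y z w = R z w x y)
    (hR3 : ∀ x y z w, R x y z w + R y z x w + R z x y w = 0)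
    (e : Module.Basis (Fin n) ℝ V)
    (ε : Fin n → ℝ)
    (hε : ∀ i, ε i = 1 ∨ ε i = -1)
    (horth : ∀ i j, B (e i) (e j) = if i = j then ε i else 0)
    (J : V → V →ₗ[ℝ] V)
    (hJ : ∀ x y z, B (J x y) z = R y x x z)
    (ρ : V →ₗ[ℝ] V)
    (hρ : ∀ x y, B (ρ x) y = ∑ i, ε i * R x (e i) (e i) y) :
    ((∀ x, (J x) ∘ₗ ρ = ρ ∘ₗ (J x)) ↔
      (∀ (π : Submodule ℝ V) (k l : ℕ) (v : Fin k → V) (εv : Fin k → ℝ)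
          (w : Fin l → V) (εw : Fin l → ℝ),
        (∀ i, v i ∈ π) → (∀ i, εv i = 1 ∨ εv i = -1) →
        (∀ i j, B (v i) (v j) = if i = j then εv i else 0) →
        Submodule.span ℝ (Set.range v) = π →
        (∀ i, ∀ y ∈ π, B (w i) y = 0) → (∀ i, εw i = 1 ∨ εw i = -1) →
        (∀ i j, B (w i) (w j) = if i = j then εw i else 0) →
        (∀ x : V, (∀ y ∈ π, B x y = 0) → x ∈ Submodule.span ℝ (Set.range w)) →
        (∑ i, εv i • J (v i)) ∘ₗ (∑ i, εw i • J (w i)) =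
          (∑ i, εw i • J (w i)) ∘ₗ (∑ i, εv i • J (v i))))
    ∧
    ((∀ x, (J x) ∘ₗ ρ = ρ ∘ₗ (J x)) ↔
      (∀ (π : Submodule ℝ V) (k : ℕ) (v : Fin k → V) (εv : Fin k → ℝ),
        (∀ i, v i ∈ π) → (∀ i, εv i = 1 ∨ εv i = -1) →
        (∀ i j, B (v i) (v j) = if i = j then εv i else 0) →
        Submodule.span ℝ (Set.range v) = π →
        (∑ i, εv i • J (v i)) ∘ₗ ρ = ρ ∘ₗ (∑ i, εv i • J (v i)))) :=
  stmt14_general B hBsymm hBnd R hR1 hR2 e ε hε horth J hJ ρ hρ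
end

section
/- Let V be a finite-dimensional real vector space with a positive definite inner product ⟨·,·⟩. Every algebraic curvature tensor R on V is a finite linear combination of tensors R_ψ, where ψ ranges over ⟨·,·⟩-self-adjoint linear maps V → V; i.e. the tensors R_ψ span the vector space of algebraic curvature tensors on V. -/
/-!
For an algebraic curvature tensor `R` put `S(x,y,z,w) = R(x,z,y,w) + R(x,w,y,z)`. Then `S` is
symmetric in `(x,y)`, in `(z,w)` and under exchange of the two pairs, and the Bianchi identity
recovers `R` from it: `S(x,w,y,z) - S(x,z,y,w) = -3 R(x,y,z,w)`. Expanding `S` in a basis and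
averaging over its eight symmetries writes it as a combination of tensors `α ⊗ β + β ⊗ α` with
`α, β` symmetric bilinear forms, that is of squares `φ ⊗ φ = (α + β) ⊗ (α + β) - α ⊗ α - β ⊗ β`.
The recovery formula sends `φ ⊗ φ` to `R_φ`, and a nondegenerate symmetric form `⟨·,·⟩` turns each
symmetric `φ` into `⟨ψ ·, ·⟩` with `ψ` self-adjoint.
-/

open LinearMap (BilinForm)
open Module Submodule

section

variable {K V : Type*} [Field K] [AddCommGroup V] [Module K V]

structure IsAlgebraicCurvatureTensor (R : V →ₗ[K] V →ₗ[K] V →ₗ[K] V →ₗ[K] K) : Prop where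
  antisymm : ∀ x y z w, R x y z w = -R y x z w
  pair_symm : ∀ x y z w, R x y z w = R z w x y
  bianchi : ∀ x y z w, R x y z w + R y z x w + R z x y w = 0

namespace CurvatureTensor

def tensor4 (f g h k : Dual K V) : V → V → V → V → K := fun x y z w => f x * g y * h z * k w

def symmProd (f g : Dual K V) : BilinForm K V :=
  BilinForm.linMulLin f g + BilinForm.linMulLin g f

theorem isSymm_symmProd (f g : Dual K V) : (symmProd f g).IsSymm :=
  ⟨fun x y => by simp only [symmProd, LinearMap.add_apply, BilinForm.linMulLin_apply]; ring⟩

def bilinSq (φ : BilinForm K V) : V → V → V → V → K := fun x y z w => φ x y * φ z w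

-- The paper's `R_ψ` is `curvTensor φ` for `φ x y = ⟨ψ x, y⟩`.
def curvTensor (φ : BilinForm K V) : V → V → V → V → K :=
  fun x y z w => φ x w * φ y z - φ x z * φ y w

theorem apply_eq_sum_basis {ι : Type*} [Fintype ι] (b : Basis ι K V)
    (T : V →ₗ[K] V →ₗ[K] V →ₗ[K] V →ₗ[K] K) (x y z w : V) :
    T x y z w = ∑ l, ∑ k, ∑ j, ∑ i,
      T (b i) (b j) (b k) (b l) * (b.repr x i * b.repr y j * b.repr z k * b.repr w l) := by
  conv_lhs => rw [← b.sum_repr w, ← b.sum_repr z, ← b.sum_repr y, ← b.sum_repr x]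
  simp only [map_sum, map_smul, LinearMap.sum_apply, LinearMap.smul_apply, smul_eq_mul,
    Finset.mul_sum]
  refine Finset.sum_congr rfl fun i _ => Finset.sum_congr rfl fun j _ =>
    Finset.sum_congr rfl fun k _ => Finset.sum_congr rfl fun l _ => by ring

theorem mem_span_tensor4 [FiniteDimensional K V] (T : V →ₗ[K] V →ₗ[K] V →ₗ[K] V →ₗ[K] K) :
    (fun x y z w => T x y z w) ∈ span K {t | ∃ f g h k : Dual K V, tensor4 f g h k = t} := by
  let b := Module.finBasis K V
  have hT : (fun x y z w => T x y z w) = ∑ l, ∑ k, ∑ j, ∑ i,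
      T (b i) (b j) (b k) (b l) • tensor4 (b.coord i) (b.coord j) (b.coord k) (b.coord l) := by
    funext x y z w
    simp only [Finset.sum_apply, Pi.smul_apply, smul_eq_mul, tensor4, Basis.coord_apply]
    exact apply_eq_sum_basis b T x y z w
  rw [hT]
  exact sum_mem fun _ _ => sum_mem fun _ _ => sum_mem fun _ _ => sum_mem fun _ _ =>
    smul_mem _ _ (subset_span ⟨_, _, _, _, rfl⟩)

def symmOfCurv : (V → V → V → V → K) →ₗ[K] (V → V → V → V → K) where
  toFun T x y z w := T x z y w + T x w y z
  map_add' _ _ := by funext x y z w; simp only [Pi.add_apply]; ring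
  map_smul' _ _ := by funext x y z w; simp only [Pi.smul_apply, smul_eq_mul, RingHom.id_apply]; ring

def symmetrize : (V → V → V → V → K) →ₗ[K] (V → V → V → V → K) where
  toFun T x y z w := T x y z w + T y x z w + T x y w z + T y x w z +
    T z w x y + T w z x y + T z w y x + T w z y x
  map_add' _ _ := by funext x y z w; simp only [Pi.add_apply]; ring
  map_smul' _ _ := by funext x y z w; simp only [Pi.smul_apply, smul_eq_mul, RingHom.id_apply]; ring

def curvOfSymm : (V → V → V → V → K) →ₗ[K] (V → V → V → V → K) where
  toFun S x y z w := S x w y z - S x z y w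
  map_add' _ _ := by funext x y z w; simp only [Pi.add_apply]; ring
  map_smul' _ _ := by funext x y z w; simp only [Pi.smul_apply, smul_eq_mul, RingHom.id_apply]; ring

theorem symmOfCurv_tensor4 (f g h k : Dual K V) :
    symmOfCurv (tensor4 f g h k) = tensor4 f h g k + tensor4 f h k g := by
  funext x y z w
  simp only [symmOfCurv, tensor4, LinearMap.coe_mk, AddHom.coe_mk, Pi.add_apply]
  ring

theorem symmetrize_tensor4 (f g h k : Dual K V) :
    symmetrize (tensor4 f g h k) =
      bilinSq (symmProd f g + symmProd h k) - bilinSq (symmProd f g) - bilinSq (symmProd h k) := by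
  funext x y z w
  simp only [symmetrize, tensor4, bilinSq, symmProd, LinearMap.coe_mk, AddHom.coe_mk, Pi.sub_apply,
    LinearMap.add_apply, BilinForm.linMulLin_apply]
  ring

theorem curvOfSymm_bilinSq (φ : BilinForm K V) : curvOfSymm (bilinSq φ) = curvTensor φ := rfl

theorem symmOfCurv_mem_span_tensor4 {T : V → V → V → V → K}
    (hT : T ∈ span K {t | ∃ f g h k : Dual K V, tensor4 f g h k = t}) :
    symmOfCurv T ∈ span K {t | ∃ f g h k : Dual K V, tensor4 f g h k = t} := by
  refine (map_span_le _ _ _).mpr ?_ (mem_map_of_mem hT)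
  rintro _ ⟨f, g, h, k, rfl⟩
  rw [symmOfCurv_tensor4]
  exact add_mem (subset_span ⟨_, _, _, _, rfl⟩) (subset_span ⟨_, _, _, _, rfl⟩)

theorem symmetrize_mem_span_bilinSq {T : V → V → V → V → K}
    (hT : T ∈ span K {t | ∃ f g h k : Dual K V, tensor4 f g h k = t}) :
    symmetrize T ∈ span K (bilinSq '' {φ : BilinForm K V | φ.IsSymm}) := by
  refine (map_span_le _ _ _).mpr ?_ (mem_map_of_mem hT)
  rintro _ ⟨f, g, h, k, rfl⟩
  rw [symmetrize_tensor4]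
  have hfg := isSymm_symmProd f g
  have hhk := isSymm_symmProd h k
  exact sub_mem (sub_mem (subset_span ⟨_, hfg.add hhk, rfl⟩) (subset_span ⟨_, hfg, rfl⟩))
    (subset_span ⟨_, hhk, rfl⟩)

theorem curvOfSymm_mem_span_curvTensor {S : V → V → V → V → K}
    (hS : S ∈ span K (bilinSq '' {φ : BilinForm K V | φ.IsSymm})) :
    curvOfSymm S ∈ span K (curvTensor '' {φ : BilinForm K V | φ.IsSymm}) := by
  refine (map_span_le _ _ _).mpr ?_ (mem_map_of_mem hS)
  rintro _ ⟨φ, hφ, rfl⟩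
  exact subset_span ⟨φ, hφ, curvOfSymm_bilinSq φ⟩

end CurvatureTensor

namespace IsAlgebraicCurvatureTensor

variable {R : V →ₗ[K] V →ₗ[K] V →ₗ[K] V →ₗ[K] K} (hR : IsAlgebraicCurvatureTensor R)
include hR

open CurvatureTensor

theorem antisymm' (x y z w : V) : R x y z w = -R x y w z := by
  rw [hR.pair_symm, hR.antisymm, ← hR.pair_symm]

theorem apply_swap_swap (x y z w : V) : R y x w z = R x y z w := by
  rw [hR.antisymm, hR.antisymm', neg_neg]

theorem symmetrize_symmOfCurv :
    symmetrize (symmOfCurv (fun x y z w => R x y z w)) =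
      (8 : K) • symmOfCurv (fun x y z w => R x y z w) := by
  funext x y z w
  simp only [symmetrize, symmOfCurv, LinearMap.coe_mk, AddHom.coe_mk, Pi.smul_apply, smul_eq_mul]
  linear_combination 2 * hR.pair_symm y w x z + 2 * hR.pair_symm z y w x +
    2 * hR.pair_symm w y z x + 2 * hR.pair_symm y z x w +
    4 * hR.apply_swap_swap x w y z + 4 * hR.apply_swap_swap x z y w

theorem curvOfSymm_symmOfCurv :
    curvOfSymm (symmOfCurv (fun x y z w => R x y z w)) = (-3 : K) • fun x y z w => R x y z w := by
  funext x y z w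
  simp only [curvOfSymm, symmOfCurv, LinearMap.coe_mk, AddHom.coe_mk, Pi.smul_apply, smul_eq_mul]
  linear_combination hR.antisymm' x y w z - hR.antisymm' x w z y + hR.bianchi y z x w -
    hR.pair_symm y z x w - hR.apply_swap_swap x z w y

theorem mem_span_curvTensor [FiniteDimensional K V] (h2 : (2 : K) ≠ 0) (h3 : (3 : K) ≠ 0) :
    (fun x y z w => R x y z w) ∈ span K (curvTensor '' {φ : BilinForm K V | φ.IsSymm}) := by
  have h24 : (24 : K) ≠ 0 := by
    have : (24 : K) = 2 * 2 * 2 * 3 := by norm_num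
    simp [this, h2, h3]
  have hR' : (fun x y z w => R x y z w) =
      (-24 : K)⁻¹ • curvOfSymm (symmetrize (symmOfCurv (fun x y z w => R x y z w))) := by
    rw [hR.symmetrize_symmOfCurv, map_smul, hR.curvOfSymm_symmOfCurv, smul_smul, smul_smul,
      show (-24 : K)⁻¹ * 8 * -3 = 1 by rw [inv_neg]; field_simp; norm_num, one_smul]
  rw [hR']
  exact smul_mem _ _ <| curvOfSymm_mem_span_curvTensor <| symmetrize_mem_span_bilinSq <|
    symmOfCurv_mem_span_tensor4 (mem_span_tensor4 R)

end IsAlgebraicCurvatureTensor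

theorem LinearMap.BilinForm.IsSymm.isAdjointPair_symmCompOfNondegenerate [FiniteDimensional K V]
    {B φ : BilinForm K V} (hB : B.IsSymm) (hBnd : B.Nondegenerate) (hφ : φ.IsSymm) :
    IsAdjointPair B B (φ.symmCompOfNondegenerate B hBnd) (φ.symmCompOfNondegenerate B hBnd) :=
  fun x y => by
    rw [BilinForm.symmCompOfNondegenerate_left_apply, hB.eq x,
      BilinForm.symmCompOfNondegenerate_left_apply, hφ.eq]

end

/-- Over a positive definite inner product space, every algebraic curvature
tensor is a finite linear combination of the tensors R_ψ with ψ self-adjoint. -/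
theorem stmt17 {V : Type*} [AddCommGroup V] [Module ℝ V] [FiniteDimensional ℝ V]
    (B : V →ₗ[ℝ] V →ₗ[ℝ] ℝ)
    (hBsymm : ∀ x y, B x y = B y x)
    (hBpos : ∀ x, x ≠ 0 → 0 < B x x)
    (R : V →ₗ[ℝ] V →ₗ[ℝ] V →ₗ[ℝ] V →ₗ[ℝ] ℝ)
    (hR1 : ∀ x y z w, R x y z w = -R y x z w)
    (hR2 : ∀ x y z w, R x y z w = R z w x y)
    (hR3 : ∀ x y z w, R x y z w + R y z x w + R z x y w = 0) :
    ∃ (N : ℕ) (c : Fin N → ℝ) (ψ : Fin N → (V →ₗ[ℝ] V)),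
      (∀ i, ∀ x y, B (ψ i x) y = B x (ψ i y)) ∧
      (∀ x y z w, R x y z w =
        ∑ i, c i * (B (ψ i x) w * B (ψ i y) z - B (ψ i x) z * B (ψ i y) w)) := by
  have hsep : ∀ x, (∀ y, B x y = 0) → x = 0 := fun x hx =>
    by_contra fun h => (hBpos x h).ne' (hx x)
  have hB : BilinForm.Nondegenerate B :=
    ⟨hsep, fun y hy => hsep y fun x => (hBsymm y x).trans (hy x)⟩
  obtain ⟨N, c, g, hg⟩ := mem_span_set'.mp <|
    IsAlgebraicCurvatureTensor.mem_span_curvTensor ⟨hR1, hR2, hR3⟩ two_ne_zero three_ne_zero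
  choose φ hφ hφg using fun i => (g i).2
  refine ⟨N, c, fun i => (φ i).symmCompOfNondegenerate B hB,
    fun i => BilinForm.IsSymm.isAdjointPair_symmCompOfNondegenerate ⟨hBsymm⟩ hB (hφ i),
    fun x y z w => ?_⟩
  change (fun x y z w => R x y z w) x y z w = _
  rw [← hg]
  simp only [Finset.sum_apply, Pi.smul_apply, smul_eq_mul, ← hφg, CurvatureTensor.curvTensor,
    BilinForm.symmCompOfNondegenerate_left_apply]
end

section
/- Let V be a finite-dimensional real vector space with a positive definite inner product ⟨·,·⟩. Every algebraic curvature tensor R on V is a finite linear combination of tensors R_φ, where φ ranges over ⟨·,·⟩-skew-adjoint linear maps V → V; i.e. the tensors R_φ span the vector space of algebraic curvature tensors on V. -/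
/-!
Expanding `R` in a basis and using its skew-symmetries gives
`4 R = ∑ R(eᵢ, eⱼ, eₖ, eₗ) (eⁱ ∧ eʲ) ⊗ (eᵏ ∧ eˡ)`; the pair symmetry makes this combination
symmetric, so polarization writes `R` as a combination `∑ cᵢ ωᵢ ⊗ ωᵢ` of squares of
alternating 2-forms. Each `ωᵢ` is `⟨φᵢ ·, ·⟩` for a skew-adjoint `φᵢ`, and
`R_φ = (cyclic sum of ω ⊗ ω over the first three slots) - 3 ω ⊗ ω`,
so by the Bianchi identity `R = ∑ (-cᵢ / 3) R_{φᵢ}`.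
-/

open Finset Module

namespace AlgebraicCurvature

variable {V : Type*} [AddCommGroup V] [Module ℝ V]

def pairMul (α β : V →ₗ[ℝ] V →ₗ[ℝ] ℝ) : V → V → V → V → ℝ :=
  fun x y z w => α x y * β z w

variable (V) in
def altSquareSpan : Submodule ℝ (V → V → V → V → ℝ) :=
  Submodule.span ℝ ((fun ω => pairMul ω ω) '' {ω | ω.IsAlt})

lemma pairMul_add_pairMul_mem_altSquareSpan {α β : V →ₗ[ℝ] V →ₗ[ℝ] ℝ}
    (hα : α.IsAlt) (hβ : β.IsAlt) : pairMul α β + pairMul β α ∈ altSquareSpan V := by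
  have hαβ : (α + β).IsAlt := fun x => by simp [hα x, hβ x]
  have hpolar : pairMul α β + pairMul β α =
      pairMul (α + β) (α + β) - pairMul α α - pairMul β β := by
    funext x y z w
    simp only [pairMul, Pi.add_apply, Pi.sub_apply, LinearMap.add_apply]
    ring
  rw [hpolar]
  refine sub_mem (sub_mem ?_ ?_) ?_ <;> exact Submodule.subset_span ⟨_, ‹_›, rfl⟩

section Basis

variable {ι : Type*} (b : Basis ι ℝ V)

noncomputable def basisWedge (i j : ι) : V →ₗ[ℝ] V →ₗ[ℝ] ℝ :=
  (b.coord i).smulRight (b.coord j) - (b.coord j).smulRight (b.coord i)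

lemma basisWedge_apply (i j : ι) (x y : V) :
    basisWedge b i j x y = b.repr x i * b.repr y j - b.repr x j * b.repr y i := by
  simp [basisWedge]

lemma isAlt_basisWedge (i j : ι) : (basisWedge b i j).IsAlt := fun x => by
  rw [basisWedge_apply]; ring

variable [Fintype ι]

lemma apply_eq_sum_repr_mul_repr (S : V →ₗ[ℝ] V →ₗ[ℝ] ℝ) (x y : V) :
    S x y = ∑ i, ∑ j, b.repr x i * b.repr y j * S (b i) (b j) := by
  conv_lhs => rw [← b.sum_repr x, ← b.sum_repr y]
  simp only [map_sum, map_smul, LinearMap.sum_apply, LinearMap.smul_apply, smul_eq_mul, mul_sum]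
  rw [sum_comm]
  exact sum_congr rfl fun i _ => sum_congr rfl fun j _ => by ring

lemma sum_apply_mul_basisWedge (S : V →ₗ[ℝ] V →ₗ[ℝ] ℝ) (x y : V) :
    ∑ i, ∑ j, S (b i) (b j) * basisWedge b i j x y = S x y - S y x := by
  rw [apply_eq_sum_repr_mul_repr b S x y, apply_eq_sum_repr_mul_repr b S y x,
    ← sum_sub_distrib]
  refine sum_congr rfl fun i _ => ?_
  rw [← sum_sub_distrib]
  refine sum_congr rfl fun j _ => ?_
  rw [basisWedge_apply]
  ring

lemma sum_apply_mul_basisWedge_mul_basisWedge (R : V →ₗ[ℝ] V →ₗ[ℝ] V →ₗ[ℝ] V →ₗ[ℝ] ℝ)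
    (x y z w : V) :
    ∑ i, ∑ j, ∑ k, ∑ l, R (b i) (b j) (b k) (b l) * basisWedge b i j x y * basisWedge b k l z w
      = R x y z w - R x y w z - (R y x z w - R y x w z) := by
  let S : V →ₗ[ℝ] V →ₗ[ℝ] ℝ :=
    R.compr₂ ((LinearMap.applyₗ w).comp (LinearMap.applyₗ z) -
      (LinearMap.applyₗ z).comp (LinearMap.applyₗ w))
  have hS : ∀ u v, S u v = R u v z w - R u v w z := fun u v => by simp [S]
  calc ∑ i, ∑ j, ∑ k, ∑ l,
        R (b i) (b j) (b k) (b l) * basisWedge b i j x y * basisWedge b k l z w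
      = ∑ i, ∑ j, (∑ k, ∑ l, R (b i) (b j) (b k) (b l) * basisWedge b k l z w)
          * basisWedge b i j x y := by
        simp only [sum_mul]
        exact sum_congr rfl fun i _ => sum_congr rfl fun j _ =>
          sum_congr rfl fun k _ => sum_congr rfl fun l _ => by ring
    _ = ∑ i, ∑ j, S (b i) (b j) * basisWedge b i j x y := by
        simp only [sum_apply_mul_basisWedge, hS]
    _ = R x y z w - R x y w z - (R y x z w - R y x w z) := by
        rw [sum_apply_mul_basisWedge, hS, hS]

end Basis

variable {R : V →ₗ[ℝ] V →ₗ[ℝ] V →ₗ[ℝ] V →ₗ[ℝ] ℝ}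

lemma mem_altSquareSpan [FiniteDimensional ℝ V] (hR1 : ∀ x y z w, R x y z w = -R y x z w)
    (hR2 : ∀ x y z w, R x y z w = R z w x y) :
    (fun x y z w => R x y z w) ∈ altSquareSpan V := by
  let b := finBasis ℝ V
  have hR4 : ∀ x y z w, R x y z w = -R x y w z := fun x y z w => by
    rw [hR2, hR1, hR2 w]
  have hsum : ∀ x y z w, ∑ i, ∑ j, ∑ k, ∑ l,
      R (b i) (b j) (b k) (b l) * basisWedge b i j x y * basisWedge b k l z w = 4 * R x y z w :=
    fun x y z w => by
      rw [sum_apply_mul_basisWedge_mul_basisWedge]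
      linarith [hR4 x y z w, hR1 x y z w, hR1 x y w z]
  have hR : (fun x y z w => R x y z w) = ∑ i, ∑ j, ∑ k, ∑ l, (R (b i) (b j) (b k) (b l) / 8) •
      (pairMul (basisWedge b i j) (basisWedge b k l) +
        pairMul (basisWedge b k l) (basisWedge b i j)) := by
    funext x y z w
    simp only [Finset.sum_apply, Pi.smul_apply, Pi.add_apply, pairMul, smul_eq_mul]
    have h' := hsum z w x y
    rw [← hR2] at h'
    calc R x y z w = (∑ i, ∑ j, ∑ k, ∑ l, R (b i) (b j) (b k) (b l) * basisWedge b i j x y *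
          basisWedge b k l z w + ∑ i, ∑ j, ∑ k, ∑ l, R (b i) (b j) (b k) (b l) *
          basisWedge b i j z w * basisWedge b k l x y) / 8 := by
          rw [hsum, h']; ring
      _ = _ := by
          simp only [add_div, sum_div, ← sum_add_distrib]
          exact sum_congr rfl fun i _ => sum_congr rfl fun j _ =>
            sum_congr rfl fun k _ => sum_congr rfl fun l _ => by ring
  rw [hR]
  exact sum_mem fun i _ => sum_mem fun j _ => sum_mem fun k _ => sum_mem fun l _ =>
    Submodule.smul_mem _ _ <|
      pairMul_add_pairMul_mem_altSquareSpan (isAlt_basisWedge b i j) (isAlt_basisWedge b k l)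

lemma exists_sum_pairMul [FiniteDimensional ℝ V] (hR1 : ∀ x y z w, R x y z w = -R y x z w)
    (hR2 : ∀ x y z w, R x y z w = R z w x y) :
    ∃ (N : ℕ) (c : Fin N → ℝ) (ω : Fin N → V →ₗ[ℝ] V →ₗ[ℝ] ℝ), (∀ i, (ω i).IsAlt) ∧
      ∀ x y z w, R x y z w = ∑ i, c i * (ω i x y * ω i z w) := by
  obtain ⟨N, c, g, hg⟩ := Submodule.mem_span_set'.mp (mem_altSquareSpan hR1 hR2)
  choose ω hω hωg using fun i => (g i).2
  refine ⟨N, c, ω, hω, fun x y z w => ?_⟩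
  have := congr_fun (congr_fun (congr_fun (congr_fun hg x) y) z) w
  simpa [← hωg, pairMul] using this.symm

lemma eq_sum_of_bianchi (hR3 : ∀ x y z w, R x y z w + R y z x w + R z x y w = 0) {N : ℕ}
    (c : Fin N → ℝ) {ω : Fin N → V →ₗ[ℝ] V →ₗ[ℝ] ℝ} (hω : ∀ i, (ω i).IsAlt)
    (hR : ∀ x y z w, R x y z w = ∑ i, c i * (ω i x y * ω i z w)) (x y z w : V) :
    R x y z w = ∑ i, -c i / 3 *
      (ω i y z * ω i x w - ω i x z * ω i y w - 2 * ω i x y * ω i z w) := by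
  calc R x y z w = -(R y z x w + R z x y w - 2 * R x y z w) / 3 := by linarith [hR3 x y z w]
    _ = _ := by
      rw [hR y z x w, hR z x y w, hR x y z w, ← sum_add_distrib, mul_sum, ← sum_sub_distrib,
        neg_div, sum_div, ← sum_neg_distrib]
      refine sum_congr rfl fun i _ => ?_
      rw [← (hω i).neg z x]
      ring

lemma nondegenerate_of_pos {B : V →ₗ[ℝ] V →ₗ[ℝ] ℝ} (hBpos : ∀ x, x ≠ 0 → 0 < B x x) :
    LinearMap.BilinForm.Nondegenerate B := by
  refine ⟨fun x hx => ?_, fun x hx => ?_⟩ <;>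
  · by_contra h
    exact (hBpos x h).ne' (hx x)

lemma exists_isSkewAdjoint_apply_eq [FiniteDimensional ℝ V] {B : V →ₗ[ℝ] V →ₗ[ℝ] ℝ}
    (hBsymm : ∀ x y, B x y = B y x) (hBpos : ∀ x, x ≠ 0 → 0 < B x x)
    {ω : V →ₗ[ℝ] V →ₗ[ℝ] ℝ} (hω : ω.IsAlt) :
    ∃ φ : V →ₗ[ℝ] V, (∀ x y, B (φ x) y = -B x (φ y)) ∧ ∀ x y, B (φ x) y = ω x y := by
  let φ : V →ₗ[ℝ] V :=
    (LinearMap.BilinForm.toDual B (nondegenerate_of_pos hBpos)).symm.toLinearMap ∘ₗ ω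
  have hφ : ∀ x y, B (φ x) y = ω x y := fun x y => by simp [φ]
  refine ⟨φ, fun x y => ?_, hφ⟩
  rw [hBsymm x, hφ, hφ, hω.neg]

end AlgebraicCurvature

open AlgebraicCurvature

/-- Over a positive definite inner product space, every algebraic curvature
tensor is a finite linear combination of the tensors R_φ with φ skew-adjoint. -/
theorem stmt18 {V : Type*} [AddCommGroup V] [Module ℝ V] [FiniteDimensional ℝ V]
    (B : V →ₗ[ℝ] V →ₗ[ℝ] ℝ)
    (hBsymm : ∀ x y, B x y = B y x)
    (hBpos : ∀ x, x ≠ 0 → 0 < B x x)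
    (R : V →ₗ[ℝ] V →ₗ[ℝ] V →ₗ[ℝ] V →ₗ[ℝ] ℝ)
    (hR1 : ∀ x y z w, R x y z w = -R y x z w)
    (hR2 : ∀ x y z w, R x y z w = R z w x y)
    (hR3 : ∀ x y z w, R x y z w + R y z x w + R z x y w = 0) :
    ∃ (N : ℕ) (c : Fin N → ℝ) (φ : Fin N → (V →ₗ[ℝ] V)),
      (∀ i, ∀ x y, B (φ i x) y = -B x (φ i y)) ∧
      (∀ x y z w, R x y z w =
        ∑ i, c i * (B (φ i y) z * B (φ i x) w - B (φ i x) z * B (φ i y) w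
          - 2 * B (φ i x) y * B (φ i z) w)) := by
  obtain ⟨N, c, ω, hω, hR⟩ := exists_sum_pairMul hR1 hR2
  choose φ hφskew hφω using fun i => exists_isSkewAdjoint_apply_eq hBsymm hBpos (hω i)
  refine ⟨N, fun i => -c i / 3, φ, hφskew, fun x y z w => ?_⟩
  simp only [hφω]
  exact eq_sum_of_bianchi hR3 c hω hR x y z w
end

section
/- Let V be a finite-dimensional real vector space with a nondegenerate symmetric bilinear form ⟨·,·⟩, and let φ : V → V be a ⟨·,·⟩-skew-adjoint linear map. Then R_φ(x,y,z,w) := ⟨φy,z⟩⟨φx,w⟩ − ⟨φx,z⟩⟨φy,w⟩ − 2⟨φx,y⟩⟨φz,w⟩ is an algebraic curvature tensor: it satisfies R_φ(x,y,z,w) = −R_φ(y,x,z,w) = R_φ(z,w,x,y) and the first Bianchi identity R_φ(x,y,z,w) + R_φ(y,z,x,w) + R_φ(z,x,y,w) = 0 for all x,y,z,w ∈ V. -/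
/-- For a ⟨·,·⟩-skew-adjoint map φ, the tensor
R_φ(x,y,z,w) = ⟨φy,z⟩⟨φx,w⟩ − ⟨φx,z⟩⟨φy,w⟩ − 2⟨φx,y⟩⟨φz,w⟩ is an algebraic curvature
tensor. -/
theorem stmt19 {V : Type*} [AddCommGroup V] [Module ℝ V] [FiniteDimensional ℝ V]
    (B : V →ₗ[ℝ] V →ₗ[ℝ] ℝ)
    (hBsymm : ∀ x y, B x y = B y x)
    (hBnd : ∀ x, (∀ y, B x y = 0) → x = 0)
    (φ : V →ₗ[ℝ] V)
    (hφ : ∀ x y, B (φ x) y = -B x (φ y))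
    (Rφ : V → V → V → V → ℝ)
    (hRφ : ∀ x y z w, Rφ x y z w =
      B (φ y) z * B (φ x) w - B (φ x) z * B (φ y) w - 2 * B (φ x) y * B (φ z) w) :
    (∀ x y z w, Rφ x y z w = -Rφ y x z w) ∧
    (∀ x y z w, Rφ x y z w = Rφ z w x y) ∧
    (∀ x y z w, Rφ x y z w + Rφ y z x w + Rφ z x y w = 0) := by
  have anti : ∀ x y, B (φ x) y = -B (φ y) x := fun x y => by
    rw [hφ, hBsymm]
  refine ⟨fun x y z w => ?_, fun x y z w => ?_, fun x y z w => ?_⟩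
  · simp only [hRφ]; rw [anti x y]; ring
  · simp only [hRφ]
    rw [anti y z, anti x w, anti x y, anti y w, anti x z]
    ring
  · simp only [hRφ]
    rw [anti y z, anti z x, anti x y]
    ring
end
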